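/- arXiv:1002.4435 — 10 statements merged into one kernel-verified Lean document; each statement's English description precedes it below -/
import Mathlib

section
/- Let k be a positive integer, let K be an algebraically closed field whose characteristic does not divide k (equivalently, k·1 ≠ 0 in K), and let G be a simple undirected graph on vertex set {1,…,n}. Then there exists a point x = (x_1,…,x_n) ∈ K^n satisfying x_i^k − 1 = 0 for every vertex i and x_i^{k-1} + x_i^{k-2}x_j + ⋯ + x_i x_j^{k-2} + x_j^{k-1} = 0 (i.e. ∑_{t=0}^{k-1} x_i^t x_j^{k-1-t} = 0) for every edge {i,j} of G, if and only if G is k-colorable (there is a proper coloring of the vertices of G with k colors). -/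
/-!
Colour with the `k` distinct `k`-th roots of unity, which exist because `k ≠ 0` in `K`. For two
`k`-th roots of unity `a, b`, the edge polynomial `∑ aᵗ bᵏ⁻¹⁻ᵗ` times `a - b` is `aᵏ - bᵏ = 0`,
so it vanishes when `a ≠ b`; when `a = b` it equals `k aᵏ⁻¹ ≠ 0`.
-/

open Finset Polynomial

theorem SimpleGraph.colorable_card_iff_exists_mapsTo {V α : Type*} (G : SimpleGraph V)
    (s : Finset α) :
    G.Colorable #s ↔ ∃ f : V → α, (∀ v, f v ∈ s) ∧ ∀ u v, G.Adj u v → f u ≠ f v := by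
  constructor
  · intro hc
    let C : G.Coloring s := hc.toColoring (by simp)
    exact ⟨fun v => C v, fun v => (C v).2, fun u v huv h => C.valid huv (Subtype.ext h)⟩
  · rintro ⟨f, hfs, hf⟩
    let C : G.Coloring s :=
      .mk (fun v => ⟨f v, hfs v⟩) fun huv h => hf _ _ huv (congrArg Subtype.val h)
    simpa using C.colorable

theorem geom_sum₂_eq_zero_iff_ne {R : Type*} [CommRing R] [IsDomain R] {k : ℕ}
    (hk : (k : R) ≠ 0) {x y : R} (hx : x ≠ 0) (hxy : x ^ k = y ^ k) :
    ∑ t ∈ range k, x ^ t * y ^ (k - 1 - t) = 0 ↔ x ≠ y := by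
  constructor
  · rintro h rfl
    rw [geom_sum₂_self] at h
    exact mul_ne_zero hk (pow_ne_zero _ hx) h
  · intro hne
    have h := geom_sum₂_mul x y k
    rw [hxy, sub_self] at h
    exact (mul_eq_zero_iff_right (sub_ne_zero.mpr hne)).mp h

theorem stmt_0 (n k : ℕ) (hk : 0 < k) (K : Type*) [Field K] [IsAlgClosed K]
    (hchar : (k : K) ≠ 0) (G : SimpleGraph (Fin n)) :
    (∃ x : Fin n → K,
      (∀ i, x i ^ k - 1 = 0) ∧
      (∀ i j, G.Adj i j → ∑ t ∈ Finset.range k, x i ^ t * x j ^ (k - 1 - t) = 0)) ↔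
    G.Colorable k := by
  have : NeZero (k : K) := ⟨hchar⟩
  obtain ⟨ζ, hζ⟩ := HasEnoughRootsOfUnity.exists_primitiveRoot K k
  have hcol := G.colorable_card_iff_exists_mapsTo (nthRootsFinset k (1 : K))
  rw [hζ.card_nthRootsFinset] at hcol
  rw [hcol]
  refine exists_congr fun x => ?_
  simp only [sub_eq_zero, mem_nthRootsFinset hk]
  refine and_congr_right fun hx => forall₂_congr fun i j => imp_congr_right fun _ => ?_
  exact geom_sum₂_eq_zero_iff_ne hchar (IsUnit.of_pow_eq_one (hx i) hk.ne').ne_zero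
    ((hx i).trans (hx j).symm)
end

section
/- Let G = (V,A) be a simple directed graph on vertices V = {1,…,n}, let K be an algebraically closed field whose characteristic does not divide n, and let ω ∈ K be a primitive n-th root of unity. Then the polynomial system consisting of x_i^n − 1 = 0 for every i ∈ V, together with ∏_{j ∈ δ⁺(i)} (ω x_i − x_j) = 0 for every i ∈ V (where δ⁺(i) is the set of out-neighbors of i, and an empty product equals 1), has a solution in K^n if and only if G has a Hamiltonian cycle, i.e., there exists a permutation σ of V that is a single n-cycle and satisfies (i, σ(i)) ∈ A for every i ∈ V. -/
/-!
A solution has no zero coordinate and gives every vertex `i` an out-neighbour `f i` with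
`x (f i) = ω * x i`. Then `x (f^[m] i) = ω ^ m * x i`, and as `ω` has order `n` the points
`f^[m] i`, `m < n`, are distinct: every `f`-orbit is all of `V`, so `f` is a Hamiltonian cycle.
Conversely, along a Hamiltonian cycle `σ` starting at `b`, put `x (σ ^ k b) = ω ^ k`; this is
well defined because `σ` and `ω` both have order `n`.
-/

open Finset Function Equiv

section

variable {α : Type*}

theorem Function.bijective_of_forall_exists_iterate_eq [Finite α] {f : α → α}
    (h : ∀ a b, ∃ m, f^[m] a = b) : Bijective f := by
  have hsurj : Surjective f := fun b => by
    obtain ⟨m, hm⟩ := h (f b) b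
    exact ⟨f^[m] b, by rw [← iterate_succ_apply' f m b, iterate_succ_apply, hm]⟩
  exact ⟨Finite.injective_iff_surjective.2 hsurj, hsurj⟩

theorem Equiv.Perm.isCycle_of_forall_exists_pow_apply_eq {σ : Perm α} {a : α} (ha : σ a ≠ a)
    (h : ∀ b, ∃ m : ℕ, (σ ^ m) a = b) : σ.IsCycle :=
  ⟨a, ha, fun b _ => let ⟨m, hm⟩ := h b; ⟨m, by rwa [zpow_natCast]⟩⟩

variable {M : Type*}

theorem forall_exists_iterate_eq_of_isPrimitiveRoot [Fintype α] [CommMonoidWithZero M]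
    [IsRightCancelMulZero M] {f : α → α} {φ : α → M} {ω : M}
    (hω : IsPrimitiveRoot ω (Fintype.card α)) (hφ : ∀ a, φ a ≠ 0)
    (hf : Semiconj φ f (ω * ·)) (a b : α) : ∃ m, f^[m] a = b := by
  have hiter (m : ℕ) : φ (f^[m] a) = ω ^ m * φ a :=
    (hf.iterate_right m a).trans (mul_left_iterate_apply ω (φ a))
  have hinj : Injective fun m : Fin (Fintype.card α) => f^[m] a := fun i j hij =>
    Fin.ext <| hω.pow_inj i.isLt j.isLt <|
      mul_right_cancel₀ (hφ a) (by rw [← hiter, ← hiter]; exact congrArg φ hij)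
  obtain ⟨m, hm⟩ := ((Fintype.bijective_iff_injective_and_card _).2 ⟨hinj, by simp⟩).2 b
  exact ⟨m, hm⟩

theorem Equiv.Perm.IsCycle.exists_apply_eq_mul_of_isPrimitiveRoot [Fintype α] [DecidableEq α]
    [CommMonoid M] {σ : Perm α} (hσ : σ.IsCycle) (hsupp : σ.support = univ) {ω : M}
    (hω : IsPrimitiveRoot ω (Fintype.card α)) :
    ∃ φ : α → M, (∀ a, φ a ^ Fintype.card α = 1) ∧ Semiconj φ σ (ω * ·) := by
  have hfix (a : α) : σ a ≠ a := Perm.mem_support.1 (hsupp ▸ mem_univ a)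
  obtain ⟨b, -⟩ := id hσ
  choose k hk using fun a => hσ.exists_pow_eq (hfix b) (hfix a)
  have horder : orderOf σ = orderOf ω := by
    rw [hσ.orderOf, hsupp, card_univ, ← hω.eq_orderOf]
  have hfin : IsOfFinOrder ω := orderOf_pos_iff.1 (horder ▸ orderOf_pos σ)
  refine ⟨fun a => ω ^ k a,
    fun a => by rw [← pow_mul, mul_comm, pow_mul, hω.pow_eq_one, one_pow], fun a => ?_⟩
  have hpow : σ ^ k (σ a) = σ ^ (k a + 1) :=
    hσ.pow_eq_pow_iff.2 ⟨b, hfix b, by rw [hk, pow_succ', Perm.mul_apply, hk]⟩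
  rw [pow_eq_pow_iff_modEq, horder, ← hfin.pow_eq_pow_iff_modEq] at hpow
  simp only [hpow, pow_succ']

end

theorem stmt_1_general (n : ℕ) (A : Fin n → Fin n → Prop) [DecidableRel A]
    (hirr : ∀ i, ¬ A i i)
    (K : Type*) [Field K] (hchar : (n : K) ≠ 0)
    (ω : K) (hω : IsPrimitiveRoot ω n) :
    (∃ x : Fin n → K,
      (∀ i, x i ^ n - 1 = 0) ∧
      (∀ i, ∏ j ∈ Finset.univ.filter (fun j => A i j), (ω * x i - x j) = 0)) ↔
    (∃ σ : Equiv.Perm (Fin n), σ.IsCycle ∧ σ.support = Finset.univ ∧ ∀ i, A i (σ i)) := by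
  rw [← Fintype.card_fin n] at hω
  constructor
  · rintro ⟨x, hxn, hprod⟩
    have hn : n ≠ 0 := by rintro rfl; simp at hchar
    have hx0 (i : Fin n) : x i ≠ 0 := fun h => by simpa [h, hn] using hxn i
    have hstep (i : Fin n) : ∃ j, A i j ∧ x j = ω * x i := by
      obtain ⟨j, hj, hj0⟩ := prod_eq_zero_iff.1 (hprod i)
      exact ⟨j, (mem_filter.1 hj).2, (sub_eq_zero.1 hj0).symm⟩
    choose f hfA hfx using hstep
    have hreach := forall_exists_iterate_eq_of_isPrimitiveRoot hω hx0 hfx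
    let σ := Equiv.ofBijective f (bijective_of_forall_exists_iterate_eq hreach)
    have hfix (i : Fin n) : f i ≠ i := fun h => hirr i (by simpa [h] using hfA i)
    refine ⟨σ, ?_, ?_, hfA⟩
    · obtain ⟨i⟩ : Nonempty (Fin n) := ⟨⟨0, Nat.pos_of_ne_zero hn⟩⟩
      exact Perm.isCycle_of_forall_exists_pow_apply_eq (hfix i) (hreach i)
    · exact eq_univ_of_forall fun i => Perm.mem_support.2 (hfix i)
  · rintro ⟨σ, hσ, hsupp, hA⟩
    obtain ⟨x, hxn, hxσ⟩ := hσ.exists_apply_eq_mul_of_isPrimitiveRoot hsupp hω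
    refine ⟨x, fun i => by rw [← Fintype.card_fin n, hxn, sub_self], fun i => ?_⟩
    exact prod_eq_zero (mem_filter.2 ⟨mem_univ _, hA i⟩) (by rw [hxσ, sub_self])

theorem stmt_1 (n : ℕ) (A : Fin n → Fin n → Prop) [DecidableRel A]
    (hirr : ∀ i, ¬ A i i)
    (K : Type*) [Field K] [IsAlgClosed K] (hchar : (n : K) ≠ 0)
    (ω : K) (hω : IsPrimitiveRoot ω n) :
    (∃ x : Fin n → K,
      (∀ i, x i ^ n - 1 = 0) ∧
      (∀ i, ∏ j ∈ Finset.univ.filter (fun j => A i j), (ω * x i - x j) = 0)) ↔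
    (∃ σ : Equiv.Perm (Fin n), σ.IsCycle ∧ σ.support = Finset.univ ∧ ∀ i, A i (σ i)) :=
  stmt_1_general n A hirr K hchar ω hω
end

section
/- If a simple undirected graph G = (V,E) contains an odd wheel as a subgraph (a cycle of odd length at least 3 together with a hub vertex adjacent to every vertex of the cycle), then the polynomial system over 𝔽₂, J_G = {x_i³+1 = 0 (i ∈ V), x_i² + x_i x_j + x_j² = 0 ({i,j} ∈ E)}, has a degree one Nullstellensatz certificate of infeasibility: there exist a_i, a_{ij}, b_{ij}, b_{ijk} ∈ 𝔽₂ with ∑_{i∈V}(a_i + ∑_{j∈V} a_{ij}x_j)(x_i³+1) + ∑_{{i,j}∈E}(b_{ij} + ∑_{k∈V} b_{ijk}x_k)(x_i²+x_ix_j+x_j²) = 1 in 𝔽₂[x_1,…,x_n]. -/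
/-!
Write `e(a, b) = a² + ab + b²`, `h = x_hub` and `y_t = x_{v t}`. The certificate is
`∑_t (y_t³ + 1) + (y_{t-1} + y_{t+1}) e(h, y_t) + y_t e(y_t, y_{t+1})`, taken around the rim.
Modulo 2 its `t`-th term is `1 + g t - g (t + 1)` with
`g t = h² (y_{t-1} + y_t) + h y_{t-1} y_t + y_{t-1} y_t²`, so the sum telescopes around the odd
cycle to `2m + 1 = 1`.
-/

open MvPolynomial

section DegreeOneSpan

variable {σ R : Type*} [Fintype σ] [LinearOrder σ] [CommSemiring R]
  (G : SimpleGraph σ) [DecidableRel G.Adj]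

/-- The left-hand sides of degree-one Nullstellensatz certificates for `J_G`. -/
def degreeOneSpan : AddSubmonoid (MvPolynomial σ R) where
  carrier := {p | ∃ (a : σ → R) (a2 : σ → σ → R) (b : σ → σ → R) (b2 : σ → σ → σ → R),
      (∑ i, (C (a i) + ∑ j, C (a2 i j) * X j) * (X i ^ 3 + 1)) +
      (∑ i, ∑ j, if i < j ∧ G.Adj i j then
          (C (b i j) + ∑ k, C (b2 i j k) * X k) * (X i ^ 2 + X i * X j + X j ^ 2)
        else 0) = p}
  zero_mem' := ⟨0, 0, 0, 0, by simp⟩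
  add_mem' := by
    rintro _ _ ⟨a, a2, b, b2, rfl⟩ ⟨a', a2', b', b2', rfl⟩
    refine ⟨a + a', a2 + a2', b + b', b2 + b2', ?_⟩
    simp only [Pi.add_apply, map_add, add_mul, Finset.sum_add_distrib, ite_add_zero]
    ring

theorem cube_mem_degreeOneSpan (i : σ) :
    (X i ^ 3 + 1 : MvPolynomial σ R) ∈ degreeOneSpan G :=
  ⟨Pi.single i 1, 0, 0, 0, by simp [apply_ite C, ite_mul, Pi.single_apply]⟩

theorem X_mul_edge_mem_degreeOneSpan (k : σ) {p q : σ} (hpq : G.Adj p q) :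
    (X k * (X p ^ 2 + X p * X q + X q ^ 2) : MvPolynomial σ R) ∈ degreeOneSpan G := by
  wlog hlt : p < q generalizing p q
  · convert this hpq.symm (lt_of_le_of_ne (not_lt.mp hlt) hpq.ne.symm) using 1
    ring
  refine ⟨0, 0, 0, fun i j l => if i = p ∧ j = q ∧ l = k then 1 else 0, ?_⟩
  have hterm : ∀ i j : σ, (if i < j ∧ G.Adj i j then
      (C 0 + ∑ l, C (if i = p ∧ j = q ∧ l = k then (1 : R) else 0) * X l)
        * (X i ^ 2 + X i * X j + X j ^ 2) else 0)
      = if i = p then if j = q then X k * (X p ^ 2 + X p * X q + X q ^ 2) else 0 else 0 := by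
    intro i j
    by_cases hi : i = p <;> by_cases hj : j = q <;> simp [hi, hj, hlt, hpq, apply_ite C]
  simp only [Pi.zero_apply, hterm]
  simp

end DegreeOneSpan

theorem Fin.sum_sub_add_one_eq_zero {M : Type*} [AddCommGroup M] {N : ℕ} [NeZero N]
    (g : Fin N → M) : ∑ t, (g t - g (t + 1)) = 0 := by
  rw [Finset.sum_sub_distrib, sub_eq_zero]
  exact (Equiv.sum_comp (Equiv.addRight 1) g).symm

theorem sum_oddWheel_certificate_eq_one {R : Type*} [CommRing R] [CharP R 2] {N : ℕ} [NeZero N]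
    (hN : Odd N) (h : R) (y : Fin N → R) :
    ∑ t, ((y t ^ 3 + 1) + y (t - 1) * (h ^ 2 + h * y t + y t ^ 2)
      + y (t + 1) * (h ^ 2 + h * y t + y t ^ 2)
      + y t * (y t ^ 2 + y t * y (t + 1) + y (t + 1) ^ 2)) = 1 := by
  set g : Fin N → R := fun t =>
    h ^ 2 * (y (t - 1) + y t) + h * y (t - 1) * y t + y (t - 1) * y t ^ 2
  have hterm : ∀ t, (y t ^ 3 + 1) + y (t - 1) * (h ^ 2 + h * y t + y t ^ 2)
      + y (t + 1) * (h ^ 2 + h * y t + y t ^ 2)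
      + y t * (y t ^ 2 + y t * y (t + 1) + y (t + 1) ^ 2) = 1 + (g t - g (t + 1)) := fun t => by
    simp only [g, add_sub_cancel_right]
    linear_combination (y t ^ 3 + y (t + 1) * h ^ 2 + h * y t * y (t + 1) + y t ^ 2 * y (t + 1)
      + y t * y (t + 1) ^ 2) * CharTwo.two_eq_zero (R := R)
  obtain ⟨k, rfl⟩ := hN
  rw [Finset.sum_congr rfl fun t _ => hterm t, Finset.sum_add_distrib,
    Fin.sum_sub_add_one_eq_zero]
  simp [CharTwo.two_eq_zero]

theorem stmt_4_general (n : ℕ) (G : SimpleGraph (Fin n)) [DecidableRel G.Adj]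
    (m : ℕ) (hub : Fin n) (v : Fin (2 * m + 1) → Fin n)
    (hcyc : ∀ i, G.Adj (v i) (v (i + 1)))
    (hhub : ∀ i, G.Adj hub (v i)) :
    ∃ (a : Fin n → ZMod 2) (a2 : Fin n → Fin n → ZMod 2)
      (b : Fin n → Fin n → ZMod 2) (b2 : Fin n → Fin n → Fin n → ZMod 2),
      (∑ i, (C (a i) + ∑ j, C (a2 i j) * X j) * (X i ^ 3 + 1)) +
      (∑ i, ∑ j, if i < j ∧ G.Adj i j then
          (C (b i j) + ∑ k, C (b2 i j k) * X k) * (X i ^ 2 + X i * X j + X j ^ 2)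
        else 0) = (1 : MvPolynomial (Fin n) (ZMod 2)) := by
  show 1 ∈ degreeOneSpan G
  rw [← sum_oddWheel_certificate_eq_one (odd_two_mul_add_one m) (X hub) (X ∘ v)]
  refine sum_mem fun t _ => add_mem (add_mem (add_mem ?_ ?_) ?_) ?_
  · exact cube_mem_degreeOneSpan G (v t)
  · exact X_mul_edge_mem_degreeOneSpan G _ (hhub t)
  · exact X_mul_edge_mem_degreeOneSpan G _ (hhub t)
  · exact X_mul_edge_mem_degreeOneSpan G _ (hcyc t)

theorem stmt_4 (n : ℕ) (G : SimpleGraph (Fin n)) [DecidableRel G.Adj]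
    (m : ℕ) (hm : 1 ≤ m) (hub : Fin n) (v : Fin (2 * m + 1) → Fin n)
    (hinj : Function.Injective v) (hne : ∀ i, v i ≠ hub)
    (hcyc : ∀ i, G.Adj (v i) (v (i + 1)))
    (hhub : ∀ i, G.Adj hub (v i)) :
    ∃ (a : Fin n → ZMod 2) (a2 : Fin n → Fin n → ZMod 2)
      (b : Fin n → Fin n → ZMod 2) (b2 : Fin n → Fin n → Fin n → ZMod 2),
      (∑ i, (C (a i) + ∑ j, C (a2 i j) * X j) * (X i ^ 3 + 1)) +
      (∑ i, ∑ j, if i < j ∧ G.Adj i j then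
          (C (b i j) + ∑ k, C (b2 i j k) * X k) * (X i ^ 2 + X i * X j + X j ^ 2)
        else 0) = (1 : MvPolynomial (Fin n) (ZMod 2)) :=
  stmt_4_general n G m hub v hcyc hhub
end

section
/- Let G = (V,E) be a simple undirected graph on {1,…,n}, and work in 𝔽₂[x_1,…,x_n]. Let F be the set of polynomials {x_i³+1 : i ∈ V} ∪ {x_k(x_i² + x_i x_j + x_j²) : {i,j} ∈ E, k ∈ V}, and let H be the set of polynomials {x_i²x_j + x_i x_j² + 1 : {i,j} ∈ E} ∪ {x_i x_j² + x_j x_k² : (i,j),(j,k),(k,i) ∈ Arcs(G)} ∪ {x_i x_j² + x_j x_k² + x_k x_l² + x_l x_i² : (i,j),(j,k),(k,l),(l,i) ∈ Arcs(G), (i,k),(j,l) ∉ Arcs(G)}. Then the constant polynomial 1 lies in the 𝔽₂-linear span of F if and only if 1 lies in the 𝔽₂-linear span of H. -/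
/-!
Every element of `H` is an `𝔽₂`-combination of elements of `F` by explicit identities.
Conversely, we build an `𝔽₂`-linear map `ψ` with `ψ 1 = 1` and `ψ F ⊆ span H`. It only reads the
coefficients of `1`, of `x_a x_b²` (`x_a³` being the case `a = b`, sent to `1`) and of squarefree
cubics. For `a ≠ b`, `ψ (x_a x_b²)` is `x_a x_b²` when `ab` is an edge and otherwise `x_a x_w²` for a
common neighbour `w` of `a, b` chosen symmetrically (or `0`). A squarefree cubic `x_i x_j x_k` goes
to `ψ (x_k x_i² + x_k x_j²)` for the first edge `ij` of its sorted triple. Then `ψ (x_i³ + 1) = 0`,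
`ψ (x_i (x_i² + x_i x_j + x_j²))` is an edge polynomial, and all other generators reduce to comparing
two edges `sx, sy` at a common vertex: the images differ by two triangles if `xy` is an edge, and
otherwise by edge polynomials plus two triangles or a chordless square through `s` and `w`.
-/

open MvPolynomial

def Fset (n : ℕ) (G : SimpleGraph (Fin n)) : Set (MvPolynomial (Fin n) (ZMod 2)) :=
  {p | ∃ i : Fin n, p = X i ^ 3 + 1} ∪
  {p | ∃ i j k : Fin n, G.Adj i j ∧
      p = X k * (X i ^ 2 + X i * X j + X j ^ 2)}

def Hset (n : ℕ) (G : SimpleGraph (Fin n)) : Set (MvPolynomial (Fin n) (ZMod 2)) :=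
  {p | ∃ i j : Fin n, G.Adj i j ∧ p = X i ^ 2 * X j + X i * X j ^ 2 + 1} ∪
  {p | ∃ i j k : Fin n, G.Adj i j ∧ G.Adj j k ∧ G.Adj k i ∧
      p = X i * X j ^ 2 + X j * X k ^ 2} ∪
  {p | ∃ i j k l : Fin n, G.Adj i j ∧ G.Adj j k ∧ G.Adj k l ∧ G.Adj l i ∧
      ¬ G.Adj i k ∧ ¬ G.Adj j l ∧
      p = X i * X j ^ 2 + X j * X k ^ 2 + X k * X l ^ 2 + X l * X i ^ 2}

open Finsupp Submodule

namespace Finsupp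

variable {σ : Type*}

theorem single_one_add_single_two_inj {a b a' b' : σ}
    (h : (single a 1 + single b 2 : σ →₀ ℕ) = single a' 1 + single b' 2) : a = a' ∧ b = b' := by
  classical
  have hb : b = b' := by
    have := DFunLike.congr_fun h b
    simp only [Finsupp.add_apply, single_apply] at this
    split_ifs at this <;> first | omega | (subst_vars; rfl)
  subst hb
  exact ⟨single_left_injective one_ne_zero (add_right_cancel h), rfl⟩

theorem single_one_add_single_one_add_single_one_ne {i j k : σ} (hij : i ≠ j) (hik : i ≠ k)
    (hjk : j ≠ k) (a b : σ) :
    (single i 1 + single j 1 + single k 1 : σ →₀ ℕ) ≠ single a 1 + single b 2 := by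
  classical
  intro h
  have := DFunLike.congr_fun h b
  simp only [Finsupp.add_apply, single_apply] at this
  split_ifs at this <;> first | omega | simp_all

theorem eq_or_eq_or_eq_of_single_one_add_single_one_add_single_one_eq {i j k p q r : σ}
    (h : (single i 1 + single j 1 + single k 1 : σ →₀ ℕ) = single p 1 + single q 1 + single r 1) :
    i = p ∨ i = q ∨ i = r := by
  classical
  have := DFunLike.congr_fun h i
  simp only [Finsupp.add_apply, single_apply] at this
  split_ifs at this <;> first | omega | simp_all

theorem single_one_add_single_one_add_single_one_inj {n : ℕ} {i j k p q r : Fin n}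
    (hij : i < j) (hjk : j < k) (hpq : p < q) (hqr : q < r)
    (h : (single i 1 + single j 1 + single k 1 : Fin n →₀ ℕ) =
      single p 1 + single q 1 + single r 1) :
    i = p ∧ j = q ∧ k = r := by
  have mem := @eq_or_eq_or_eq_of_single_one_add_single_one_add_single_one_eq
  have hi := mem h
  have hj := mem (i := j) (j := i) (k := k) (by rw [← h]; abel)
  have hk := mem (i := k) (j := i) (k := j) (by rw [← h]; abel)
  have hp := mem h.symm
  have hq := mem (i := q) (j := p) (k := r) (p := i) (q := j) (r := k) (by rw [h]; abel)
  have hr := mem (i := r) (j := p) (k := q) (p := i) (q := j) (r := k) (by rw [h]; abel)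
  simp only [Fin.ext_iff, Fin.lt_def] at *
  omega

end Finsupp

variable {n : ℕ} (G : SimpleGraph (Fin n)) {i j k l s w x y : Fin n}

namespace Hset

theorem edge_mem_span (h : G.Adj i j) :
    X i ^ 2 * X j + X i * X j ^ 2 + 1 ∈ span (ZMod 2) (Hset n G) :=
  subset_span (Or.inl (Or.inl ⟨i, j, h, rfl⟩))

theorem triangle_mem_span (hij : G.Adj i j) (hjk : G.Adj j k) (hki : G.Adj k i) :
    X i * X j ^ 2 + X j * X k ^ 2 ∈ span (ZMod 2) (Hset n G) :=
  subset_span (Or.inl (Or.inr ⟨i, j, k, hij, hjk, hki, rfl⟩))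

theorem square_mem_span (hij : G.Adj i j) (hjk : G.Adj j k) (hkl : G.Adj k l) (hli : G.Adj l i)
    (hik : ¬ G.Adj i k) (hjl : ¬ G.Adj j l) :
    X i * X j ^ 2 + X j * X k ^ 2 + X k * X l ^ 2 + X l * X i ^ 2 ∈ span (ZMod 2) (Hset n G) :=
  subset_span (Or.inr ⟨i, j, k, l, hij, hjk, hkl, hli, hik, hjl, rfl⟩)

/-- Two triangles plus two edge polynomials when `s ~ w`, and the chordless square `x s y w` plus
two edge polynomials otherwise. -/
theorem commonNeighbors_mem_span (hxy : ¬ G.Adj x y) (hs : s ∈ G.commonNeighbors x y)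
    (hw : w ∈ G.commonNeighbors x y) :
    X x * X s ^ 2 + X y * X s ^ 2 + (X x * X w ^ 2 + X y * X w ^ 2) ∈
      span (ZMod 2) (Hset n G) := by
  have two : (2 : MvPolynomial (Fin n) (ZMod 2)) = 0 := CharTwo.two_eq_zero
  rw [SimpleGraph.mem_commonNeighbors] at hs hw
  by_cases hsw : G.Adj s w
  · convert add_mem (add_mem (triangle_mem_span G hw.1.symm hs.1 hsw) (edge_mem_span G hw.1))
      (add_mem (triangle_mem_span G hw.2.symm hs.2 hsw) (edge_mem_span G hw.2)) using 1
    linear_combination (-(X x ^ 2 * X w + X y ^ 2 * X w + 1)) * two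
  · convert add_mem (add_mem (square_mem_span G hs.1 hs.2.symm hw.2 hw.1.symm hxy hsw)
      (edge_mem_span G hs.2.symm)) (edge_mem_span G hw.1.symm) using 1
    linear_combination (-(X s * X y ^ 2 + X w * X x ^ 2 + 1)) * two

end Hset

namespace Reduction

open Classical in
noncomputable def pairImage (a b : Fin n) : MvPolynomial (Fin n) (ZMod 2) :=
  if a = b then 1
  else if G.Adj a b then X a * X b ^ 2
  else if h : (G.commonNeighbors a b).Nonempty then X a * X h.some ^ 2
  else 0

theorem pairImage_self (a : Fin n) : pairImage G a a = 1 := if_pos rfl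

theorem pairImage_of_adj (h : G.Adj x y) : pairImage G x y = X x * X y ^ 2 := by
  rw [pairImage, if_neg h.ne, if_pos h]

theorem exists_pairImage_of_not_adj (hxy : x ≠ y) (hnadj : ¬ G.Adj x y)
    (h : (G.commonNeighbors x y).Nonempty) :
    ∃ w ∈ G.commonNeighbors x y,
      pairImage G x y = X x * X w ^ 2 ∧ pairImage G y x = X y * X w ^ 2 := by
  have h' : (G.commonNeighbors y x).Nonempty := G.commonNeighbors_symm x y ▸ h
  refine ⟨h.some, h.some_mem, ?_, ?_⟩
  · rw [pairImage, if_neg hxy, if_neg hnadj, dif_pos h]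
  · rw [pairImage, if_neg hxy.symm, if_neg (fun hyx => hnadj hyx.symm), dif_pos h']
    congr 4
    exact G.commonNeighbors_symm y x

theorem pairImage_add_pairImage_mem_span (hxy : x ≠ y) (hsx : G.Adj s x) (hsy : G.Adj s y) :
    pairImage G y s + pairImage G y x + (pairImage G x s + pairImage G x y) ∈
      span (ZMod 2) (Hset n G) := by
  rw [pairImage_of_adj G hsy.symm, pairImage_of_adj G hsx.symm]
  by_cases hnadj : G.Adj x y
  · rw [pairImage_of_adj G hnadj, pairImage_of_adj G hnadj.symm]
    convert add_mem (Hset.triangle_mem_span G hnadj.symm hsx.symm hsy)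
      (Hset.triangle_mem_span G hnadj hsy.symm hsx) using 1
    ring
  · have hs : s ∈ G.commonNeighbors x y := (G.mem_commonNeighbors).2 ⟨hsx.symm, hsy.symm⟩
    obtain ⟨w, hw, hxy', hyx'⟩ := exists_pairImage_of_not_adj G hxy hnadj ⟨s, hs⟩
    rw [hxy', hyx']
    convert Hset.commonNeighbors_mem_span G hnadj hs hw using 1
    ring

open Classical in
noncomputable def tripleImage (i j k : Fin n) : MvPolynomial (Fin n) (ZMod 2) :=
  if G.Adj i j then pairImage G k i + pairImage G k j
  else if G.Adj i k then pairImage G j i + pairImage G j k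
  else if G.Adj j k then pairImage G i j + pairImage G i k
  else 0

def sortedTriples (n : ℕ) : Finset (Fin n × Fin n × Fin n) :=
  Finset.univ.filter fun t => t.1 < t.2.1 ∧ t.2.1 < t.2.2

noncomputable def reduce : MvPolynomial (Fin n) (ZMod 2) →ₗ[ZMod 2] MvPolynomial (Fin n) (ZMod 2) :=
  (lcoeff (ZMod 2) 0).smulRight 1 +
  ∑ p : Fin n × Fin n,
    (lcoeff (ZMod 2) (single p.1 1 + single p.2 2)).smulRight (pairImage G p.1 p.2) +
  ∑ t ∈ sortedTriples n,
    (lcoeff (ZMod 2) (single t.1 1 + single t.2.1 1 + single t.2.2 1)).smulRight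
      (tripleImage G t.1 t.2.1 t.2.2)

theorem reduce_monomial (m : Fin n →₀ ℕ) :
    reduce G (monomial m 1) =
      (if m = 0 then 1 else 0) +
      ∑ p : Fin n × Fin n, (if m = single p.1 1 + single p.2 2 then pairImage G p.1 p.2 else 0) +
      ∑ t ∈ sortedTriples n, (if m = single t.1 1 + single t.2.1 1 + single t.2.2 1 then
        tripleImage G t.1 t.2.1 t.2.2 else 0) := by
  simp [reduce, coeff_monomial]

theorem mem_sortedTriples {t : Fin n × Fin n × Fin n} :
    t ∈ sortedTriples n ↔ t.1 < t.2.1 ∧ t.2.1 < t.2.2 := by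
  simp [sortedTriples]

theorem reduce_one : reduce G 1 = 1 := by
  rw [one_def, reduce_monomial]
  simp [eq_comm (a := (0 : Fin n →₀ ℕ))]

theorem reduce_X_mul_X_sq (a b : Fin n) : reduce G (X a * X b ^ 2) = pairImage G a b := by
  have hm : X a * X b ^ 2 = monomial (single a 1 + single b 2) (1 : ZMod 2) := by
    rw [X_pow_eq_monomial, X, monomial_mul, one_mul]
  rw [hm, reduce_monomial, Finset.sum_eq_single (a, b), Finset.sum_eq_zero]
  · simp
  · intro t ht
    rw [mem_sortedTriples] at ht
    rw [if_neg (single_one_add_single_one_add_single_one_ne ht.1.ne (ht.1.trans ht.2).ne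
      ht.2.ne a b).symm]
  · intro p _ hp
    exact if_neg fun h => hp (Prod.ext (single_one_add_single_two_inj h).1.symm
      (single_one_add_single_two_inj h).2.symm)
  · simp

theorem reduce_X_mul_X_mul_X (hij : i < j) (hjk : j < k) :
    reduce G (X i * X j * X k) = tripleImage G i j k := by
  have hm : X i * X j * X k = monomial (single i 1 + single j 1 + single k 1) (1 : ZMod 2) := by
    simp [X, monomial_mul]
  rw [hm, reduce_monomial, Finset.sum_eq_single (i, j, k), Finset.sum_eq_zero]
  · simp
  · intro p _
    rw [if_neg (single_one_add_single_one_add_single_one_ne hij.ne (hij.trans hjk).ne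
      hjk.ne _ _)]
  · intro t ht htne
    rw [mem_sortedTriples] at ht
    refine if_neg fun h => htne ?_
    obtain ⟨h1, h2, h3⟩ := single_one_add_single_one_add_single_one_inj hij hjk ht.1 ht.2 h
    rw [h1, h2, h3]
  · simp [mem_sortedTriples, hij, hjk]

theorem reduce_X_mul_mem_span (hij : G.Adj i j) :
    reduce G (X i * (X i ^ 2 + X i * X j + X j ^ 2)) ∈ span (ZMod 2) (Hset n G) := by
  rw [show X i * (X i ^ 2 + X i * X j + X j ^ 2) = X i * X i ^ 2 + X j * X i ^ 2 + X i * X j ^ 2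
      by ring, map_add, map_add, reduce_X_mul_X_sq, reduce_X_mul_X_sq, reduce_X_mul_X_sq,
    pairImage_self, pairImage_of_adj G hij.symm, pairImage_of_adj G hij]
  convert Hset.edge_mem_span G hij using 1
  ring

/-- The cubic `x_i x_j x_k` was sent through the first edge of its sorted triple, and any two edges
of a triple share a vertex. -/
theorem reduce_X_mul_mem_span_of_ne (hij : G.Adj i j) (hlt : i < j) (hki : k ≠ i) (hkj : k ≠ j) :
    reduce G (X k * (X i ^ 2 + X i * X j + X j ^ 2)) ∈ span (ZMod 2) (Hset n G) := by
  have hself : pairImage G k i + pairImage G k j + (pairImage G k i + pairImage G k j) ∈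
      span (ZMod 2) (Hset n G) := by
    rw [CharTwo.add_self_eq_zero]
    exact zero_mem _
  rw [show X k * (X i ^ 2 + X i * X j + X j ^ 2) = X k * X i ^ 2 + X k * X j ^ 2 + X i * X j * X k
      by ring, map_add, map_add, reduce_X_mul_X_sq, reduce_X_mul_X_sq]
  rcases lt_trichotomy k i with hk_lt_i | rfl | hi_lt_k
  · rw [show X i * X j * X k = X k * X i * X j by ring, reduce_X_mul_X_mul_X G hk_lt_i hlt,
      tripleImage]
    split_ifs with hki_adj hkj_adj
    · convert pairImage_add_pairImage_mem_span G hkj hki_adj.symm hij using 1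
      ring
    · convert pairImage_add_pairImage_mem_span G hki hkj_adj.symm hij.symm using 1
      ring
    · exact hself
  · exact absurd rfl hki
  rcases lt_trichotomy k j with hk_lt_j | rfl | hj_lt_k
  · rw [show X i * X j * X k = X i * X k * X j by ring, reduce_X_mul_X_mul_X G hi_lt_k hk_lt_j,
      tripleImage]
    by_cases hik_adj : G.Adj i k
    · rw [if_pos hik_adj]
      convert pairImage_add_pairImage_mem_span G hkj hik_adj hij using 1
      ring
    · rw [if_neg hik_adj, if_pos hij]
      exact hself
  · exact absurd rfl hkj
  · rw [reduce_X_mul_X_mul_X G hlt hj_lt_k, tripleImage, if_pos hij]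
    exact hself

theorem reduce_mem_span_Hset {f : MvPolynomial (Fin n) (ZMod 2)} (hf : f ∈ Fset n G) :
    reduce G f ∈ span (ZMod 2) (Hset n G) := by
  rcases hf with ⟨i, rfl⟩ | ⟨i, j, k, hij, rfl⟩
  · rw [show X i ^ 3 + 1 = X i * X i ^ 2 + 1 by ring, map_add, reduce_X_mul_X_sq, pairImage_self,
      reduce_one, CharTwo.add_self_eq_zero]
    exact zero_mem _
  rcases eq_or_ne k i with rfl | hki
  · exact reduce_X_mul_mem_span G hij
  rcases eq_or_ne k j with rfl | hkj
  · convert reduce_X_mul_mem_span G hij.symm using 2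
    ring
  rcases hij.ne.lt_or_gt with hlt | hlt
  · exact reduce_X_mul_mem_span_of_ne G hij hlt hki hkj
  · convert reduce_X_mul_mem_span_of_ne G hij.symm hlt hkj hki using 2
    ring

end Reduction

namespace Fset

theorem cube_add_one_mem_span (i : Fin n) : X i ^ 3 + 1 ∈ span (ZMod 2) (Fset n G) :=
  subset_span (Or.inl ⟨i, rfl⟩)

theorem X_mul_mem_span (h : G.Adj i j) (k : Fin n) :
    X k * (X i ^ 2 + X i * X j + X j ^ 2) ∈ span (ZMod 2) (Fset n G) :=
  subset_span (Or.inr ⟨i, j, k, h, rfl⟩)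

end Fset

theorem Hset_subset_span_Fset : Hset n G ⊆ span (ZMod 2) (Fset n G) := by
  have two : (2 : MvPolynomial (Fin n) (ZMod 2)) = 0 := CharTwo.two_eq_zero
  intro p hp
  rw [SetLike.mem_coe]
  rcases hp with ((⟨i, j, hij, rfl⟩ | ⟨i, j, k, hij, hjk, hki, rfl⟩) |
    ⟨i, j, k, l, hij, hjk, hkl, hli, -, -, rfl⟩)
  · convert add_mem (Fset.X_mul_mem_span G hij j) (Fset.cube_add_one_mem_span G j) using 1
    linear_combination (-X j ^ 3) * two
  · convert add_mem (add_mem (add_mem (add_mem (add_mem (Fset.X_mul_mem_span G hjk i)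
      (Fset.X_mul_mem_span G hjk j)) (Fset.X_mul_mem_span G hij k))
      (Fset.X_mul_mem_span G hki.symm i)) (Fset.cube_add_one_mem_span G i))
      (Fset.cube_add_one_mem_span G j) using 1
    linear_combination (-(X i * X j * X k + X i * X k ^ 2 + X j ^ 3 + X j ^ 2 * X k
      + X i ^ 2 * X k + X i ^ 3 + 1)) * two
  · convert add_mem (add_mem (add_mem (add_mem (add_mem (add_mem (add_mem
      (Fset.X_mul_mem_span G hij i) (Fset.X_mul_mem_span G hjk i)) (Fset.X_mul_mem_span G hkl i))
      (Fset.X_mul_mem_span G hli i)) (Fset.X_mul_mem_span G hij j)) (Fset.X_mul_mem_span G hjk j))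
      (Fset.X_mul_mem_span G hij k)) (Fset.X_mul_mem_span G hli k) using 1
    linear_combination (-(X i ^ 3 + X i ^ 2 * X j + X i * X j ^ 2 + X i * X j * X k
      + X i * X k ^ 2 + X i * X k * X l + X i * X l ^ 2 + X j ^ 3 + X j ^ 2 * X k
      + X i ^ 2 * X k)) * two

theorem stmt_5 (n : ℕ) (G : SimpleGraph (Fin n)) :
    (1 : MvPolynomial (Fin n) (ZMod 2)) ∈ Submodule.span (ZMod 2) (Fset n G) ↔
    (1 : MvPolynomial (Fin n) (ZMod 2)) ∈ Submodule.span (ZMod 2) (Hset n G) := by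
  constructor
  · intro h
    have hle : span (ZMod 2) (Fset n G) ≤ (span (ZMod 2) (Hset n G)).comap (Reduction.reduce G) :=
      span_le.2 fun f hf => Reduction.reduce_mem_span_Hset G hf
    simpa only [mem_comap, Reduction.reduce_one] using hle h
  · exact fun h => span_le.2 (Hset_subset_span_Fset G) h
end

section
/- Let k > 2 be an integer, K an algebraically closed field whose characteristic does not divide k, and ω ∈ K a primitive k-th root of unity. In K[x_1,…,x_k], let I be the ideal generated by the doubly covered cycle encoding polynomials: g_i = x_i + ((ω^{2+i} − ω^{2−i})/(ω³−ω)) x_{k−1} + ((ω^{1−i} − ω^{3+i})/(ω³−ω)) x_k for i = 1,…,k−2, g_{k−1} = (x_{k−1} − ω x_k)(x_{k−1} − ω^{−1} x_k), and g_k = x_k^k − 1 (note ω³ − ω ≠ 0 since k > 2). Then I is a radical ideal, and the zero set {x ∈ K^k : g(x) = 0 for all g ∈ I} has exactly 2k elements. -/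
/-!
Modulo the quadratic generator `(x_{k-1} - α x_k)(x_{k-1} - β x_k)` (here `α = ω`, `β = ω⁻¹`),
every polynomial in `x_{k-1}, x_k` is congruent to one of the form `p(x_k) + x_{k-1} q(x_k)`;
the linear generators eliminate `x_1, …, x_{k-2}`, and `x_k^k - 1` lets one take
`deg p, deg q < k`. The zero set consists of the `2k` points with `(x_{k-1}, x_k) = (ε v, v)`,
`ε ∈ {α, β}`, `v^k = 1`. If such a normal form vanishes there, then `p(v) + ε v q(v) = 0` for
both values of `ε` forces `p` and `q` to vanish at all `k`-th roots of unity, so `p = q = 0`.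
Hence `I` contains every polynomial vanishing on its zero set and is radical. Nothing here
depends on the coefficients of the linear generators.
-/

open MvPolynomial
open scoped Polynomial

theorem Polynomial.modByMonic_eq_zero_of_eval_eq_zero {R : Type*} [CommRing R] [IsDomain R]
    {m p : R[X]} {S : Finset R} (hm : m.Monic)
    (hS : m.natDegree ≤ S.card) (h : ∀ v ∈ S, (p %ₘ m).eval v = 0) : p %ₘ m = 0 := by
  rcases eq_or_ne m 1 with rfl | hm1
  · exact Polynomial.modByMonic_one p
  · exact eq_zero_of_natDegree_lt_card_of_eval_eq_zero' _ S h
      ((natDegree_modByMonic_lt p hm hm1).trans_le hS)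

section PairForm

variable {R σ : Type*} [CommRing R] {I : Ideal (MvPolynomial σ R)} {a b : σ} {α β : R}

/-- The normal form modulo `(X_a - α X_b)(X_a - β X_b)` of polynomials in `X_a, X_b`. -/
noncomputable def pairForm (a b : σ) (p q : R[X]) : MvPolynomial σ R :=
  Polynomial.aeval (X b) p + X a * Polynomial.aeval (X b) q

theorem eval_pairForm (x : σ → R) (p q : R[X]) :
    eval x (pairForm a b p q) = p.eval (x b) + x a * q.eval (x b) := by
  have h_aeval (r : R[X]) : eval x (Polynomial.aeval (X b) r) = r.eval (x b) := by
    rw [← Polynomial.coe_aeval_eq_eval, ← aeval_X (R := R) x b, Polynomial.aeval_algHom_apply,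
      aeval_eq_eval]
  simp only [pairForm, map_add, map_mul, eval_X, h_aeval]

theorem pairForm_mul_pairForm_sub_mem (hQ : (X a - C α * X b) * (X a - C β * X b) ∈ I)
    (p₁ q₁ p₂ q₂ : R[X]) :
    pairForm a b p₁ q₁ * pairForm a b p₂ q₂ -
      pairForm a b (p₁ * p₂ - Polynomial.C (α * β) * Polynomial.X ^ 2 * (q₁ * q₂))
        (p₁ * q₂ + p₂ * q₁ + Polynomial.C (α + β) * Polynomial.X * (q₁ * q₂)) ∈ I := by
  convert I.mul_mem_left (Polynomial.aeval (X b) (q₁ * q₂)) hQ using 1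
  simp only [pairForm, map_sub, map_add, map_mul, map_pow, Polynomial.aeval_X,
    Polynomial.aeval_C, algebraMap_eq]
  ring

theorem exists_pairForm_sub_mem (hQ : (X a - C α * X b) * (X a - C β * X b) ∈ I)
    (hX : ∀ j, ∃ p q, X j - pairForm a b p q ∈ I) (f : MvPolynomial σ R) :
    ∃ p q, f - pairForm a b p q ∈ I := by
  induction f using MvPolynomial.induction_on with
  | C r => exact ⟨Polynomial.C r, 0, by simp [pairForm]⟩
  | add f g hf hg =>
    obtain ⟨p₁, q₁, h₁⟩ := hf
    obtain ⟨p₂, q₂, h₂⟩ := hg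
    refine ⟨p₁ + p₂, q₁ + q₂, ?_⟩
    convert I.add_mem h₁ h₂ using 1
    simp only [pairForm, map_add]
    ring
  | mul_X f j hf =>
    obtain ⟨p₁, q₁, h₁⟩ := hf
    obtain ⟨p₂, q₂, h₂⟩ := hX j
    refine ⟨p₁ * p₂ - Polynomial.C (α * β) * Polynomial.X ^ 2 * (q₁ * q₂),
      p₁ * q₂ + p₂ * q₁ + Polynomial.C (α + β) * Polynomial.X * (q₁ * q₂), ?_⟩
    convert I.add_mem (I.add_mem (I.mul_mem_right (X j) h₁)
      (I.mul_mem_left (pairForm a b p₁ q₁) h₂)) (pairForm_mul_pairForm_sub_mem hQ p₁ q₁ p₂ q₂)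
      using 1
    ring

theorem pairForm_sub_pairForm_modByMonic_mem {m : R[X]} (hmI : Polynomial.aeval (X b) m ∈ I)
    (p q : R[X]) :
    pairForm a b p q - pairForm a b (p %ₘ m) (q %ₘ m) ∈ I := by
  convert I.mul_mem_right (pairForm a b (p /ₘ m) (q /ₘ m)) hmI using 1
  rw [Polynomial.modByMonic_eq_sub_mul_div p m, Polynomial.modByMonic_eq_sub_mul_div q m]
  simp only [pairForm, map_sub, map_mul]
  ring

end PairForm

theorem vanishingIdeal_zeroLocus_le_of_pairForm {K σ : Type*} [Field K]
    {I : Ideal (MvPolynomial σ K)} {a b : σ} {α β : K} {m : K[X]} {S : Finset K}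
    (hQ : (X a - C α * X b) * (X a - C β * X b) ∈ I)
    (hX : ∀ j, ∃ p q, X j - pairForm a b p q ∈ I)
    (hm : m.Monic) (hmI : Polynomial.aeval (X b) m ∈ I)
    (hαβ : α ≠ β) (hS : m.natDegree ≤ S.card) (hS0 : ∀ v ∈ S, v ≠ 0)
    (hpts : ∀ v ∈ S, ∀ ε, ε = α ∨ ε = β → ∃ x ∈ zeroLocus K I, x a = ε * v ∧ x b = v) :
    vanishingIdeal K (zeroLocus K I) ≤ I := by
  intro f hf
  obtain ⟨p, q, hpq⟩ := exists_pairForm_sub_mem hQ hX f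
  have hred : f - pairForm a b (p %ₘ m) (q %ₘ m) ∈ I := by
    simpa only [sub_add_sub_cancel] using
      I.add_mem hpq (pairForm_sub_pairForm_modByMonic_mem (a := a) hmI p q)
  have hvals : ∀ v ∈ S, ∀ ε, ε = α ∨ ε = β →
      (p %ₘ m).eval v + ε * v * (q %ₘ m).eval v = 0 := by
    intro v hv ε hε
    obtain ⟨x, hx, hxa, hxb⟩ := hpts v hv ε hε
    have h : eval x (f - pairForm a b (p %ₘ m) (q %ₘ m)) = 0 := hx _ hred
    have hfx : eval x f = 0 := hf x hx
    rw [map_sub, hfx, eval_pairForm, hxa, hxb] at h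
    linear_combination -h
  have hq : ∀ v ∈ S, (q %ₘ m).eval v = 0 := by
    intro v hv
    have h : (α - β) * v * (q %ₘ m).eval v = 0 := by
      linear_combination hvals v hv α (.inl rfl) - hvals v hv β (.inr rfl)
    simpa [sub_ne_zero.mpr hαβ, hS0 v hv] using h
  have hp : ∀ v ∈ S, (p %ₘ m).eval v = 0 := fun v hv ↦ by
    simpa [hq v hv] using hvals v hv α (.inl rfl)
  rw [Polynomial.modByMonic_eq_zero_of_eval_eq_zero hm hS hp,
    Polynomial.modByMonic_eq_zero_of_eval_eq_zero hm hS hq] at hred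
  simpa [pairForm] using hred

section CycleIdeal

variable {K : Type*} [Field K] {k : ℕ}

/-- The paper's `x_i` is `X (i - 1)`, so `x_{k-1}` is `X (secondLastIdx hk)`. -/
def secondLastIdx (hk : 2 < k) : Fin k := ⟨k - 2, Nat.sub_lt_self two_pos hk.le⟩

def lastIdx (hk : 2 < k) : Fin k := ⟨k - 1, Nat.sub_one_lt_of_lt hk⟩

noncomputable def cycleIdeal (k : ℕ) (hk : 2 < k) (α β : K) (c d : ℕ → K) :
    Ideal (MvPolynomial (Fin k) K) :=
  Ideal.span (
    {p | ∃ (i : ℕ) (_ : 1 ≤ i) (h : i ≤ k - 2),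
      p = X (⟨i - 1, (i.sub_le 1).trans_lt (h.trans_lt (secondLastIdx hk).isLt)⟩ : Fin k)
        + C (c i) * X (secondLastIdx hk) + C (d i) * X (lastIdx hk)} ∪
    {(X (secondLastIdx hk) - C α * X (lastIdx hk)) *
      (X (secondLastIdx hk) - C β * X (lastIdx hk))} ∪
    {X (lastIdx hk) ^ k - 1})

/-- The zero of the linear generators with `x_{k-1} = u` and `x_k = v`. -/
def cyclePoint (k : ℕ) (c d : ℕ → K) (u v : K) : Fin k → K := fun j =>
  if (j : ℕ) < k - 2 then -(c (j + 1) * u + d (j + 1) * v)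
  else if (j : ℕ) = k - 2 then u else v

variable {c d : ℕ → K} {u v : K}

theorem cyclePoint_of_lt {j : Fin k} (hj : (j : ℕ) < k - 2) :
    cyclePoint k c d u v j = -(c (j + 1) * u + d (j + 1) * v) :=
  if_pos hj

theorem ncard_setOf_pow_eq_one_and_eq_mul {α β ζ : K} (hζ : IsPrimitiveRoot ζ k) (hk : 0 < k)
    (hαβ : α ≠ β) :
    {uv : K × K | uv.2 ^ k = 1 ∧ (uv.1 = α * uv.2 ∨ uv.1 = β * uv.2)}.ncard = 2 * k := by
  set R : Set K := ↑(Polynomial.nthRootsFinset k (1 : K))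
  have hR (v : K) : v ∈ R ↔ v ^ k = 1 := by simp [R, Polynomial.mem_nthRootsFinset hk]
  have hgraph (γ : K) : Function.Injective (fun v : K ↦ (γ * v, v)) :=
    fun v w h ↦ congrArg Prod.snd h
  have hunion : {uv : K × K | uv.2 ^ k = 1 ∧ (uv.1 = α * uv.2 ∨ uv.1 = β * uv.2)} =
      (fun v ↦ (α * v, v)) '' R ∪ (fun v ↦ (β * v, v)) '' R := by
    ext ⟨u, v⟩
    simp only [Set.mem_ofPred_eq, Set.mem_union, Set.mem_image, Prod.mk.injEq, hR]
    constructor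
    · rintro ⟨hv, rfl | rfl⟩
      exacts [.inl ⟨v, hv, rfl, rfl⟩, .inr ⟨v, hv, rfl, rfl⟩]
    · rintro (⟨w, hw, rfl, rfl⟩ | ⟨w, hw, rfl, rfl⟩)
      exacts [⟨hw, .inl rfl⟩, ⟨hw, .inr rfl⟩]
  have hdisj : Disjoint ((fun v ↦ (α * v, v)) '' R) ((fun v ↦ (β * v, v)) '' R) := by
    rw [Set.disjoint_left]
    rintro _ ⟨v, hv, rfl⟩ ⟨w, -, h⟩
    obtain ⟨h, rfl⟩ := Prod.mk.inj h
    exact hαβ (mul_right_cancel₀ (Polynomial.ne_zero_of_mem_nthRootsFinset one_ne_zero hv) h).symm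
  rw [hunion, Set.ncard_union_eq hdisj (R.toFinite.image _) (R.toFinite.image _),
    Set.ncard_image_of_injective _ (hgraph α), Set.ncard_image_of_injective _ (hgraph β),
    Set.ncard_coe_finset, hζ.card_nthRootsFinset, two_mul]

variable (hk : 2 < k) {α β : K}
include hk

theorem cyclePoint_secondLastIdx : cyclePoint k c d u v (secondLastIdx hk) = u := by
  simp only [cyclePoint, secondLastIdx, lt_self_iff_false, ↓reduceIte]

theorem cyclePoint_lastIdx : cyclePoint k c d u v (lastIdx hk) = v := by
  have h₁ : ¬k - 1 < k - 2 := by omega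
  have h₂ : k - 1 ≠ k - 2 := by omega
  simp only [cyclePoint, lastIdx, h₁, h₂, ↓reduceIte]

theorem cyclePoint_injective :
    Function.Injective (fun uv : K × K ↦ cyclePoint k c d uv.1 uv.2) := by
  intro uv uv' h
  have hu := congr_fun h (secondLastIdx hk)
  have hv := congr_fun h (lastIdx hk)
  simp only [cyclePoint_secondLastIdx, cyclePoint_lastIdx] at hu hv
  exact Prod.ext hu hv

theorem X_add_mem_cycleIdeal {j : Fin k} (hj : (j : ℕ) < k - 2) :
    X j + C (c (j + 1)) * X (secondLastIdx hk) + C (d (j + 1)) * X (lastIdx hk) ∈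
      cycleIdeal k hk α β c d :=
  Ideal.subset_span (.inl (.inl ⟨j + 1, by omega, by omega, by simp⟩))

theorem quadratic_mem_cycleIdeal :
    (X (secondLastIdx hk) - C α * X (lastIdx hk)) *
      (X (secondLastIdx hk) - C β * X (lastIdx hk)) ∈ cycleIdeal k hk α β c d :=
  Ideal.subset_span (.inl (.inr rfl))

theorem X_pow_sub_one_mem_cycleIdeal : X (lastIdx hk) ^ k - 1 ∈ cycleIdeal k hk α β c d :=
  Ideal.subset_span (.inr rfl)

theorem exists_X_sub_pairForm_mem_cycleIdeal (j : Fin k) :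
    ∃ p q, X j - pairForm (secondLastIdx hk) (lastIdx hk) p q ∈ cycleIdeal k hk α β c d := by
  rcases lt_trichotomy (j : ℕ) (k - 2) with hj | hj | hj
  · refine ⟨Polynomial.C (-d (j + 1)) * Polynomial.X, Polynomial.C (-c (j + 1)), ?_⟩
    convert X_add_mem_cycleIdeal hk hj using 1
    simp only [pairForm, map_neg, map_mul, Polynomial.aeval_C, algebraMap_eq, Polynomial.aeval_X]
    ring
  · refine ⟨0, 1, ?_⟩
    rw [show j = secondLastIdx hk from Fin.ext hj]
    simp [pairForm]
  · refine ⟨Polynomial.X, 0, ?_⟩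
    rw [show j = lastIdx hk from Fin.ext (show (j : ℕ) = k - 1 by omega)]
    simp [pairForm]

theorem cyclePoint_mem_zeroLocus (hv : v ^ k = 1) (hu : u = α * v ∨ u = β * v) :
    cyclePoint k c d u v ∈ zeroLocus K (cycleIdeal k hk α β c d) := by
  rw [cycleIdeal, zeroLocus_span]
  rintro p ((⟨i, h₁, h₂, rfl⟩ | rfl) | rfl) <;>
    simp only [aeval_eq_eval, map_add, map_sub, map_mul, map_pow, map_one, eval_X, eval_C,
      cyclePoint_secondLastIdx, cyclePoint_lastIdx]
  · rw [cyclePoint_of_lt (show i - 1 < k - 2 by omega), Nat.sub_add_cancel h₁]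
    ring
  · rcases hu with rfl | rfl <;> ring
  · rw [hv, sub_self]

theorem eq_cyclePoint_of_mem_zeroLocus {x : Fin k → K}
    (hx : x ∈ zeroLocus K (cycleIdeal k hk α β c d)) :
    x = cyclePoint k c d (x (secondLastIdx hk)) (x (lastIdx hk)) := by
  funext j
  rcases lt_trichotomy (j : ℕ) (k - 2) with hj | hj | hj
  · have h := hx _ (X_add_mem_cycleIdeal hk (α := α) (β := β) (c := c) (d := d) hj)
    simp only [aeval_eq_eval, map_add, map_mul, eval_X, eval_C] at h
    rw [cyclePoint_of_lt hj]
    linear_combination h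
  · rw [show j = secondLastIdx hk from Fin.ext hj, cyclePoint_secondLastIdx]
  · rw [show j = lastIdx hk from Fin.ext (show (j : ℕ) = k - 1 by omega), cyclePoint_lastIdx]

theorem zeroLocus_cycleIdeal :
    zeroLocus K (cycleIdeal k hk α β c d) = (fun uv : K × K ↦ cyclePoint k c d uv.1 uv.2) ''
      {uv | uv.2 ^ k = 1 ∧ (uv.1 = α * uv.2 ∨ uv.1 = β * uv.2)} := by
  ext x
  constructor
  · intro hx
    refine ⟨(x (secondLastIdx hk), x (lastIdx hk)), ⟨?_, ?_⟩,
      (eq_cyclePoint_of_mem_zeroLocus hk hx).symm⟩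
    · simpa [sub_eq_zero] using hx _ (X_pow_sub_one_mem_cycleIdeal hk)
    · simpa [sub_eq_zero] using hx _ (quadratic_mem_cycleIdeal hk)
  · rintro ⟨⟨u, v⟩, ⟨hv, hu⟩, rfl⟩
    exact cyclePoint_mem_zeroLocus hk hv hu

theorem vanishingIdeal_zeroLocus_cycleIdeal_le {ζ : K} (hζ : IsPrimitiveRoot ζ k)
    (hαβ : α ≠ β) :
    vanishingIdeal K (zeroLocus K (cycleIdeal k hk α β c d)) ≤ cycleIdeal k hk α β c d := by
  refine vanishingIdeal_zeroLocus_le_of_pairForm (quadratic_mem_cycleIdeal hk)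
    (exists_X_sub_pairForm_mem_cycleIdeal hk) (Polynomial.monic_X_pow_sub_C 1 (by omega))
    (m := Polynomial.X ^ k - Polynomial.C 1) (S := Polynomial.nthRootsFinset k (1 : K)) ?_ hαβ
    (by rw [Polynomial.natDegree_X_pow_sub_C, hζ.card_nthRootsFinset])
    (fun v hv ↦ Polynomial.ne_zero_of_mem_nthRootsFinset one_ne_zero hv) ?_
  · simpa using X_pow_sub_one_mem_cycleIdeal hk
  · intro v hv ε hε
    rw [Polynomial.mem_nthRootsFinset (by omega)] at hv
    exact ⟨_, cyclePoint_mem_zeroLocus hk hv (by rcases hε with rfl | rfl <;> simp),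
      cyclePoint_secondLastIdx hk, cyclePoint_lastIdx hk⟩

theorem cycleIdeal_isRadical {ζ : K} (hζ : IsPrimitiveRoot ζ k) (hαβ : α ≠ β) :
    (cycleIdeal k hk α β c d).IsRadical :=
  (radical_le_vanishingIdeal_zeroLocus _).trans (vanishingIdeal_zeroLocus_cycleIdeal_le hk hζ hαβ)

theorem ncard_zeroLocus_cycleIdeal {ζ : K} (hζ : IsPrimitiveRoot ζ k) (hαβ : α ≠ β) :
    (zeroLocus K (cycleIdeal k hk α β c d)).ncard = 2 * k := by
  rw [zeroLocus_cycleIdeal hk, Set.ncard_image_of_injective _ (cyclePoint_injective hk),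
    ncard_setOf_pow_eq_one_and_eq_mul hζ (by omega) hαβ]

end CycleIdeal

theorem IsPrimitiveRoot.ne_inv {K : Type*} [Field K] {ζ : K} {k : ℕ} (hζ : IsPrimitiveRoot ζ k)
    (hk : 2 < k) : ζ ≠ ζ⁻¹ := by
  intro h
  refine hζ.pow_ne_one_of_pos_of_lt two_ne_zero hk ?_
  rw [sq]
  nth_rewrite 2 [h]
  exact mul_inv_cancel₀ (hζ.ne_zero (by omega))

theorem stmt_7 (k : ℕ) (hk : 2 < k) (K : Type*) [Field K] (ω : K) (hω : IsPrimitiveRoot ω k)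
    (I : Ideal (MvPolynomial (Fin k) K))
    (hI : I = Ideal.span (
      {p | ∃ (i : ℕ) (_ : 1 ≤ i) (_ : i ≤ k - 2),
        p = X (⟨i - 1, by omega⟩ : Fin k)
          + C ((ω ^ ((2 : ℤ) + (i : ℤ)) - ω ^ ((2 : ℤ) - (i : ℤ))) / (ω ^ 3 - ω)) *
              X (⟨k - 2, by omega⟩ : Fin k)
          + C ((ω ^ ((1 : ℤ) - (i : ℤ)) - ω ^ ((3 : ℤ) + (i : ℤ))) / (ω ^ 3 - ω)) *
              X (⟨k - 1, by omega⟩ : Fin k)} ∪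
      {(X (⟨k - 2, by omega⟩ : Fin k) - C ω * X (⟨k - 1, by omega⟩ : Fin k)) *
         (X (⟨k - 2, by omega⟩ : Fin k) - C ω⁻¹ * X (⟨k - 1, by omega⟩ : Fin k))} ∪
      {X (⟨k - 1, by omega⟩ : Fin k) ^ k - 1})) :
    I.IsRadical ∧
      {x : Fin k → K | ∀ f ∈ I, MvPolynomial.eval x f = 0}.ncard = 2 * k := by
  subst hI
  exact ⟨cycleIdeal_isRadical hk hω (hω.ne_inv hk),
    ncard_zeroLocus_cycleIdeal hk hω (hω.ne_inv hk)⟩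
end

section
/- Let G₁ and G₂ be k-regular simple undirected graphs on n₁ and n₂ vertices respectively with adjacency matrices A_{G₁} and A_{G₂}, and suppose G₂ is connected. If B is a real n₁×n₂ matrix satisfying B A_{G₂} = A_{G₁} B, then all column sums of B are equal: ∑_{i=1}^{n₁} B_{i,s} = ∑_{i=1}^{n₁} B_{i,t} for all 1 ≤ s,t ≤ n₂. -/
/-!
The vector `c = 1ᵀ B` of column sums satisfies `c A_{G₂} = 1ᵀ A_{G₁} B = k c`, because the columns
of `A_{G₁}` sum to `k`. As `A_{G₂}` is symmetric, `c` is a `k`-eigenvector of `A_{G₂}`, i.e. it lies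
in the kernel of the Laplacian `k I - A_{G₂}`; for connected `G₂` that kernel consists of the
constant vectors.
-/

open Matrix

namespace SimpleGraph

variable {V : Type*} [Fintype V] {G : SimpleGraph V} [DecidableRel G.Adj] {k : ℕ}

theorem IsRegularOfDegree.one_vecMul_adjMatrix {α : Type*} [NonAssocSemiring α]
    (hG : G.IsRegularOfDegree k) : (1 : V → α) ᵥ* G.adjMatrix α = (k : α) • 1 := by
  ext v
  simp [hG v]

theorem IsRegularOfDegree.lapMatrix_mulVec_eq_zero_of_adjMatrix_mulVec_eq [DecidableEq V]
    (hG : G.IsRegularOfDegree k) {x : V → ℝ} (hx : G.adjMatrix ℝ *ᵥ x = (k : ℝ) • x) :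
    G.lapMatrix ℝ *ᵥ x = 0 := by
  ext v
  rw [lapMatrix_mulVec_apply, hG v, ← adjMatrix_mulVec_apply, hx]
  simp

theorem Connected.eq_of_adjMatrix_mulVec_eq_of_isRegularOfDegree [DecidableEq V]
    (hconn : G.Connected) (hG : G.IsRegularOfDegree k) {x : V → ℝ}
    (hx : G.adjMatrix ℝ *ᵥ x = (k : ℝ) • x) (i j : V) :
    x i = x j :=
  (G.lapMatrix_mulVec_eq_zero_iff_forall_reachable).mp
    (hG.lapMatrix_mulVec_eq_zero_of_adjMatrix_mulVec_eq hx) i j (hconn i j)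

theorem adjMatrix_mulVec_one_vecMul_of_mul_adjMatrix_eq {α V₁ V₂ : Type*}
    [CommSemiring α] [Fintype V₁] [Fintype V₂] {G₁ : SimpleGraph V₁} {G₂ : SimpleGraph V₂}
    [DecidableRel G₁.Adj] [DecidableRel G₂.Adj] {k : ℕ} (h₁ : G₁.IsRegularOfDegree k)
    {B : Matrix V₁ V₂ α} (hB : B * G₂.adjMatrix α = G₁.adjMatrix α * B) :
    G₂.adjMatrix α *ᵥ (1 ᵥ* B) = (k : α) • (1 ᵥ* B) := by
  rw [← transpose_adjMatrix, mulVec_transpose, vecMul_vecMul, hB, ← vecMul_vecMul,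
    h₁.one_vecMul_adjMatrix, smul_vecMul]

end SimpleGraph

theorem stmt_14 (k n₁ n₂ : ℕ) (G₁ : SimpleGraph (Fin n₁)) (G₂ : SimpleGraph (Fin n₂))
    [DecidableRel G₁.Adj] [DecidableRel G₂.Adj]
    (h₁ : G₁.IsRegularOfDegree k) (h₂ : G₂.IsRegularOfDegree k)
    (hconn : G₂.Connected)
    (B : Matrix (Fin n₁) (Fin n₂) ℝ)
    (hB : B * G₂.adjMatrix ℝ = G₁.adjMatrix ℝ * B) :
    ∀ s t : Fin n₂, ∑ i, B i s = ∑ i, B i t := by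
  intro s t
  have hcol := hconn.eq_of_adjMatrix_mulVec_eq_of_isRegularOfDegree h₂
    (SimpleGraph.adjMatrix_mulVec_one_vecMul_of_mul_adjMatrix_eq h₁ hB) s t
  simpa [vecMul, dotProduct] using hcol
end

section
/- Let G₁ and G₂ be connected k-regular compact simple graphs on n₁ and n₂ vertices respectively with n₁ ≤ n₂, and suppose G₁ and G₂ are not isomorphic. Let G be their disjoint union on n = n₁ + n₂ vertices (vertices 1,…,n₁ from G₁ and n₁+1,…,n from G₂) with adjacency matrix A_G, and let P_G = {P ∈ ℝ^{n×n} : P A_G = A_G P, all row sums and column sums of P equal 1, and P_{i,j} ≥ 0 for all i,j}. Then the convex hull of the integer (0/1) points of P_G equals {P ∈ P_G : ∑_{i=1}^{n₁} ∑_{j=n₁+1}^{n} P_{i,j} = 0}. -/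
open Matrix

/-- The polytope of doubly stochastic matrices commuting with a given matrix `A`. -/
def commPolytope {V : Type*} [Fintype V] (A : Matrix V V ℝ) : Set (Matrix V V ℝ) :=
  {P | P * A = A * P ∧ (∀ j, ∑ i, P i j = 1) ∧ (∀ i, ∑ j, P i j = 1) ∧
    ∀ i j, 0 ≤ P i j}

/-- The 0/1 (integer) points of a set of real matrices. -/
def intPoints {V : Type*} (S : Set (Matrix V V ℝ)) : Set (Matrix V V ℝ) :=
  {P ∈ S | ∀ i j, P i j = 0 ∨ P i j = 1}

/-- A graph is compact if its polytope `P_G` equals the convex hull of its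
integer points. -/
def IsCompactGraph {V : Type*} [Fintype V] (G : SimpleGraph V) [DecidableRel G.Adj] : Prop :=
  commPolytope (G.adjMatrix ℝ) = convexHull ℝ (intPoints (commPolytope (G.adjMatrix ℝ)))

/-- The adjacency matrix of the disjoint union of two graphs, in block form. -/
def sumAdjMatrix (n₁ n₂ : ℕ) (G₁ : SimpleGraph (Fin n₁)) (G₂ : SimpleGraph (Fin n₂))
    [DecidableRel G₁.Adj] [DecidableRel G₂.Adj] :
    Matrix (Fin n₁ ⊕ Fin n₂) (Fin n₁ ⊕ Fin n₂) ℝ :=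
  Matrix.fromBlocks (G₁.adjMatrix ℝ) 0 0 (G₂.adjMatrix ℝ)

/-!
An integer point of `P_G` is the permutation matrix of an automorphism of `G = G₁ ⊕ G₂`. As `G₁`
and `G₂` are connected, an automorphism either preserves both components or swaps them, and a swap
would be an isomorphism `G₁ ≃ G₂`. Hence the integer points of `P_G` are exactly the block-diagonal
matrices `diag(Q₁, Q₂)` with `Qᵢ` an integer point of `P_{Gᵢ}`.

On the other side, a doubly stochastic matrix with vanishing upper right block also has vanishing
lower left block, so the points of `P_G` with vanishing upper right block are exactly the matrices
`diag(P₁, P₂)` with `Pᵢ ∈ P_{Gᵢ}`. Since `(Q₁, Q₂) ↦ diag(Q₁, Q₂)` is linear, the convex hull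
of the first set is the image of `conv(int P_{G₁}) × conv(int P_{G₂}) = P_{G₁} × P_{G₂}`, which is
the second set.
-/

lemma eq_zero_of_sum_sum_eq_zero {α β : Type*} [Fintype α] [Fintype β] {f : α → β → ℝ}
    (hf : ∀ a b, 0 ≤ f a b) (h : ∑ a, ∑ b, f a b = 0) (a : α) (b : β) : f a b = 0 := by
  have hrow := congr_fun
    ((Fintype.sum_eq_zero_iff_of_nonneg fun a => Fintype.sum_nonneg (hf a)).mp h) a
  exact congr_fun ((Fintype.sum_eq_zero_iff_of_nonneg (hf a)).mp hrow) b

lemma eq_of_sum_eq_one_of_apply_eq_one {ι : Type*} [Fintype ι] {f : ι → ℝ} (hf : ∀ i, 0 ≤ f i)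
    (hsum : ∑ i, f i = 1) {i j : ι} (hi : f i = 1) (hj : f j = 1) : i = j := by
  by_contra hij
  have := Finset.add_le_sum (fun k _ => hf k) (Finset.mem_univ i) (Finset.mem_univ j) hij
  rw [hsum, hi, hj] at this
  norm_num at this

lemma exists_perm_eq_permMatrix_of_mem_doublyStochastic {V : Type*} [Fintype V] [DecidableEq V]
    {P : Matrix V V ℝ} (hP : P ∈ doublyStochastic ℝ V) (h01 : ∀ i j, P i j = 0 ∨ P i j = 1) :
    ∃ σ : Equiv.Perm V, P = σ.permMatrix ℝ := by
  have hnonneg : ∀ i j, 0 ≤ P i j := fun _ _ => nonneg_of_mem_doublyStochastic hP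
  have hex : ∀ i, ∃ j, P i j = 1 := by
    intro i
    by_contra! h
    have hrow := sum_row_of_mem_doublyStochastic hP i
    rw [Finset.sum_eq_zero fun j _ => (h01 i j).resolve_right (h j)] at hrow
    exact zero_ne_one hrow
  choose f hf using hex
  have hinj : f.Injective := fun i i' h =>
    eq_of_sum_eq_one_of_apply_eq_one (hnonneg · _) (sum_col_of_mem_doublyStochastic hP _)
      (hf i) (h ▸ hf i')
  refine ⟨Equiv.ofBijective f (Finite.injective_iff_bijective.mp hinj), ?_⟩
  ext i j
  simp only [PEquiv.toMatrix_toPEquiv_apply, Equiv.ofBijective_apply, Pi.single_apply]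
  split_ifs with h
  · exact h ▸ hf i
  · exact (h01 i j).resolve_right fun h1 =>
      h (eq_of_sum_eq_one_of_apply_eq_one (hnonneg i) (sum_row_of_mem_doublyStochastic hP i) h1
        (hf i))

lemma submatrix_eq_self_of_permMatrix_mul_comm {R V : Type*} [NonAssocSemiring R] [Fintype V]
    [DecidableEq V] {A : Matrix V V R} {σ : Equiv.Perm V}
    (h : σ.permMatrix R * A = A * σ.permMatrix R) : A.submatrix σ σ = A := by
  ext i j
  have := congr_fun₂ h i (σ j)
  rw [PEquiv.toMatrix_toPEquiv_mul, PEquiv.mul_toMatrix_toPEquiv] at this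
  simpa using this

lemma mem_commPolytope_iff {V : Type*} [Fintype V] [DecidableEq V] {A P : Matrix V V ℝ} :
    P ∈ commPolytope A ↔ P ∈ doublyStochastic ℝ V ∧ P * A = A * P := by
  simp only [commPolytope, Set.mem_ofPred_eq, mem_doublyStochastic_iff_sum]
  tauto

section Blocks

variable {m n : Type*} [Fintype m] [Fintype n]

variable (m n) in
def fromBlocksDiagₗ : Matrix m m ℝ × Matrix n n ℝ →ₗ[ℝ] Matrix (m ⊕ n) (m ⊕ n) ℝ where
  toFun Q := fromBlocks Q.1 0 0 Q.2
  map_add' _ _ := by simp [fromBlocks_add]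
  map_smul' _ _ := by simp [fromBlocks_smul]

lemma toBlocks₂₁_eq_zero_of_toBlocks₁₂_eq_zero [DecidableEq m] [DecidableEq n]
    {P : Matrix (m ⊕ n) (m ⊕ n) ℝ} (hP : P ∈ doublyStochastic ℝ (m ⊕ n))
    (h : P.toBlocks₁₂ = 0) : P.toBlocks₂₁ = 0 := by
  have h12 : ∀ i j, P (.inl i) (.inr j) = 0 := fun i j => congr_fun₂ h i j
  have hcol := fun j => sum_col_of_mem_doublyStochastic hP (.inl j)
  have hrow := fun i => sum_row_of_mem_doublyStochastic hP (.inl i)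
  simp only [Fintype.sum_sum_type, h12, Finset.sum_const_zero, add_zero] at hcol hrow
  -- the upper left block has total mass `card m` both by rows and by columns
  have hmass : ∑ j, ∑ i, P (.inr i) (.inl j) = 0 :=
    calc ∑ j, ∑ i, P (.inr i) (.inl j) = ∑ j, (1 - ∑ i, P (.inl i) (.inl j)) :=
          Finset.sum_congr rfl fun j _ => by linarith [hcol j]
      _ = ∑ i, (1 - ∑ j, P (.inl i) (.inl j)) := by
          simp only [Finset.sum_sub_distrib]
          rw [Finset.sum_comm]
      _ = 0 := by simp [hrow]
  ext i j
  exact eq_zero_of_sum_sum_eq_zero (fun _ _ => nonneg_of_mem_doublyStochastic hP) hmass j i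

lemma eq_fromBlocks_of_mem_doublyStochastic [DecidableEq m] [DecidableEq n]
    {P : Matrix (m ⊕ n) (m ⊕ n) ℝ} (hP : P ∈ doublyStochastic ℝ (m ⊕ n))
    (h : P.toBlocks₁₂ = 0) : P = fromBlocks P.toBlocks₁₁ 0 0 P.toBlocks₂₂ := by
  conv_lhs => rw [← fromBlocks_toBlocks P, h, toBlocks₂₁_eq_zero_of_toBlocks₁₂_eq_zero hP h]

variable {A P₁ : Matrix m m ℝ} {B P₂ : Matrix n n ℝ}

lemma fromBlocks_mem_commPolytope_iff :
    fromBlocks P₁ 0 0 P₂ ∈ commPolytope (fromBlocks A 0 0 B) ↔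
      P₁ ∈ commPolytope A ∧ P₂ ∈ commPolytope B := by
  simp only [commPolytope, Set.mem_ofPred_eq, fromBlocks_multiply, fromBlocks_inj,
    Fintype.sum_sum_type, Sum.forall, fromBlocks_apply₁₁, fromBlocks_apply₁₂, fromBlocks_apply₂₁,
    fromBlocks_apply₂₂, Matrix.zero_apply, Finset.sum_const_zero, add_zero, zero_add,
    Matrix.mul_zero, Matrix.zero_mul, le_refl, implies_true, and_true, true_and]
  tauto

lemma fromBlocks_mem_intPoints_iff :
    fromBlocks P₁ 0 0 P₂ ∈ intPoints (commPolytope (fromBlocks A 0 0 B)) ↔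
      P₁ ∈ intPoints (commPolytope A) ∧ P₂ ∈ intPoints (commPolytope B) := by
  simp only [intPoints, Set.mem_sep_iff, fromBlocks_mem_commPolytope_iff, Sum.forall,
    fromBlocks_apply₁₁, fromBlocks_apply₁₂, fromBlocks_apply₂₁, fromBlocks_apply₂₂,
    Matrix.zero_apply, true_or, implies_true, and_true, true_and]
  tauto

lemma sep_commPolytope_fromBlocks_eq_image [DecidableEq m] [DecidableEq n] :
    {P ∈ commPolytope (fromBlocks A 0 0 B) | ∑ i : m, ∑ j : n, P (.inl i) (.inr j) = 0} =
      fromBlocksDiagₗ m n '' (commPolytope A ×ˢ commPolytope B) := by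
  ext P
  constructor
  · rintro ⟨hP, hsum⟩
    have h12 : P.toBlocks₁₂ = 0 := by
      ext i j
      exact eq_zero_of_sum_sum_eq_zero (fun _ _ => hP.2.2.2 _ _) hsum i j
    have hblocks := eq_fromBlocks_of_mem_doublyStochastic (mem_commPolytope_iff.mp hP).1 h12
    rw [hblocks] at hP
    exact ⟨(P.toBlocks₁₁, P.toBlocks₂₂), fromBlocks_mem_commPolytope_iff.mp hP, hblocks.symm⟩
  · rintro ⟨Q, hQ, rfl⟩
    exact ⟨fromBlocks_mem_commPolytope_iff.mpr hQ, by simp [fromBlocksDiagₗ]⟩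

end Blocks

namespace SimpleGraph

variable {V W : Type*} {G : SimpleGraph V} {H : SimpleGraph W}

lemma exists_iso_eq_permMatrix_of_mem_intPoints [Fintype V] [DecidableEq V] [DecidableRel G.Adj]
    {P : Matrix V V ℝ} (hP : P ∈ intPoints (commPolytope (G.adjMatrix ℝ))) :
    ∃ φ : G ≃g G, P = Equiv.Perm.permMatrix ℝ φ.toEquiv := by
  obtain ⟨hP, h01⟩ := hP
  obtain ⟨hds, hcomm⟩ := mem_commPolytope_iff.mp hP
  obtain ⟨σ, rfl⟩ := exists_perm_eq_permMatrix_of_mem_doublyStochastic hds h01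
  have hA := submatrix_eq_self_of_permMatrix_mul_comm hcomm
  refine ⟨⟨σ, fun {a b} => ?_⟩, rfl⟩
  have hab := congr_fun₂ hA a b
  simp only [submatrix_apply, adjMatrix_apply] at hab
  split_ifs at hab <;> simp_all

lemma fromBlocks_adjMatrix {R : Type*} [Zero R] [One R] [DecidableRel G.Adj] [DecidableRel H.Adj]
    [DecidableRel (G ⊕g H).Adj] :
    fromBlocks (G.adjMatrix R) 0 0 (H.adjMatrix R) = (G ⊕g H).adjMatrix R := by
  ext (i | i) (j | j) <;> simp [adjMatrix_apply]

lemma Reachable.sum_isLeft_eq {u v : V ⊕ W} (h : (G ⊕g H).Reachable u v) :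
    u.isLeft = v.isLeft := by
  rcases u with u | u <;> rcases v with v | v
  · rfl
  · exact absurd h (not_reachable_sum_inl_inr u v)
  · exact absurd h.symm (not_reachable_sum_inl_inr v u)
  · rfl

lemma Preconnected.isLeft_eq_of_hom {U : Type*} {K : SimpleGraph U} (hK : K.Preconnected)
    (f : K →g G ⊕g H) (a b : U) : (f a).isLeft = (f b).isLeft :=
  ((hK a b).map f).sum_isLeft_eq

lemma nonempty_iso_of_sum_swap (φ : G ⊕g H ≃g G ⊕g H) (hl : ∀ v, (φ (.inl v)).isRight)
    (hr : ∀ w, (φ (.inr w)).isLeft) : Nonempty (G ≃g H) := by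
  choose f hf using fun v => Sum.isRight_iff.mp (hl v)
  have hinj : f.Injective := fun a b h =>
    Sum.inl_injective (φ.injective (by rw [hf, hf, h]))
  have hsurj : f.Surjective := by
    intro w
    obtain ⟨v | w', hu⟩ := φ.surjective (.inr w)
    · exact ⟨v, Sum.inr_injective ((hf v).symm.trans hu)⟩
    · simpa [hu] using hr w'
  refine ⟨⟨Equiv.ofBijective f ⟨hinj, hsurj⟩, fun {a b} => ?_⟩⟩
  change H.Adj (f a) (f b) ↔ G.Adj a b
  rw [← sum_adj_inr (G := G), ← hf, ← hf, φ.map_adj_iff, sum_adj_inl]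

lemma Iso.sum_isLeft_apply_inl (hG : G.Connected) (hH : H.Preconnected)
    (hGH : ¬ Nonempty (G ≃g H)) (φ : G ⊕g H ≃g G ⊕g H) (v : V) : (φ (.inl v)).isLeft := by
  have hleft : ∀ a b, (φ (.inl a)).isLeft = (φ (.inl b)).isLeft :=
    hG.preconnected.isLeft_eq_of_hom (φ.toHom.comp Embedding.sumInl.toHom)
  have hright : ∀ a b, (φ (.inr a)).isLeft = (φ (.inr b)).isLeft :=
    hH.isLeft_eq_of_hom (φ.toHom.comp Embedding.sumInr.toHom)
  obtain ⟨v₀⟩ := hG.nonempty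
  by_contra hv
  refine hGH (nonempty_iso_of_sum_swap φ (fun v' => ?_) fun w => ?_)
  · exact Sum.not_isLeft.mp (hleft v' v ▸ hv)
  · obtain ⟨v' | w', hu⟩ := φ.surjective (.inl v₀)
    · exact (hv ((hleft v' v).symm.trans (by rw [hu]; rfl))).elim
    · rw [hright w w', hu]
      rfl

lemma intPoints_commPolytope_fromBlocks_adjMatrix {V₁ V₂ : Type*} [Fintype V₁] [Fintype V₂]
    [DecidableEq V₁] [DecidableEq V₂] {G₁ : SimpleGraph V₁} {G₂ : SimpleGraph V₂}
    [DecidableRel G₁.Adj] [DecidableRel G₂.Adj] (hG₁ : G₁.Connected) (hG₂ : G₂.Preconnected)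
    (h : ¬ Nonempty (G₁ ≃g G₂)) :
    intPoints (commPolytope (fromBlocks (G₁.adjMatrix ℝ) 0 0 (G₂.adjMatrix ℝ))) =
      fromBlocksDiagₗ V₁ V₂ '' (intPoints (commPolytope (G₁.adjMatrix ℝ)) ×ˢ
        intPoints (commPolytope (G₂.adjMatrix ℝ))) := by
  ext P
  constructor
  · intro hP
    classical
    obtain ⟨φ, rfl⟩ := exists_iso_eq_permMatrix_of_mem_intPoints (G := G₁ ⊕g G₂)
      (by rwa [← fromBlocks_adjMatrix])
    have h12 : (Equiv.Perm.permMatrix ℝ φ.toEquiv).toBlocks₁₂ = 0 := by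
      ext i j
      have hi := Iso.sum_isLeft_apply_inl hG₁ hG₂ h φ i
      simp only [toBlocks₁₂, of_apply, PEquiv.toMatrix_toPEquiv_apply, Pi.single_apply,
        Matrix.zero_apply]
      exact if_neg fun hj => by rw [show φ (.inl i) = .inr j from hj.symm] at hi; simp at hi
    have hblocks := eq_fromBlocks_of_mem_doublyStochastic (mem_commPolytope_iff.mp hP.1).1 h12
    rw [hblocks] at hP
    exact ⟨(_, _), fromBlocks_mem_intPoints_iff.mp hP, hblocks.symm⟩
  · rintro ⟨Q, hQ, rfl⟩
    exact fromBlocks_mem_intPoints_iff.mpr hQ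

end SimpleGraph

theorem stmt_15_general (n₁ n₂ : ℕ)
    (G₁ : SimpleGraph (Fin n₁)) (G₂ : SimpleGraph (Fin n₂))
    [DecidableRel G₁.Adj] [DecidableRel G₂.Adj]
    (hconn₁ : G₁.Connected) (hconn₂ : G₂.Connected)
    (hcomp₁ : IsCompactGraph G₁) (hcomp₂ : IsCompactGraph G₂)
    (hniso : ¬ Nonempty (G₁ ≃g G₂)) :
    convexHull ℝ (intPoints (commPolytope (sumAdjMatrix n₁ n₂ G₁ G₂))) =
      {P ∈ commPolytope (sumAdjMatrix n₁ n₂ G₁ G₂) |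
        ∑ i : Fin n₁, ∑ j : Fin n₂, P (Sum.inl i) (Sum.inr j) = 0} := by
  rw [sumAdjMatrix, SimpleGraph.intPoints_commPolytope_fromBlocks_adjMatrix hconn₁
    hconn₂.preconnected hniso, ← LinearMap.image_convexHull, convexHull_prod, ← hcomp₁, ← hcomp₂,
    sep_commPolytope_fromBlocks_eq_image]

theorem stmt_15 (k n₁ n₂ : ℕ) (hn : n₁ ≤ n₂)
    (G₁ : SimpleGraph (Fin n₁)) (G₂ : SimpleGraph (Fin n₂))
    [DecidableRel G₁.Adj] [DecidableRel G₂.Adj]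
    (hreg₁ : G₁.IsRegularOfDegree k) (hreg₂ : G₂.IsRegularOfDegree k)
    (hconn₁ : G₁.Connected) (hconn₂ : G₂.Connected)
    (hcomp₁ : IsCompactGraph G₁) (hcomp₂ : IsCompactGraph G₂)
    (hniso : ¬ Nonempty (G₁ ≃g G₂)) :
    convexHull ℝ (intPoints (commPolytope (sumAdjMatrix n₁ n₂ G₁ G₂))) =
      {P ∈ commPolytope (sumAdjMatrix n₁ n₂ G₁ G₂) |
        ∑ i : Fin n₁, ∑ j : Fin n₂, P (Sum.inl i) (Sum.inr j) = 0} :=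
  stmt_15_general n₁ n₂ G₁ G₂ hconn₁ hconn₂ hcomp₁ hcomp₂ hniso
end

section
/- Let G₁ and G₂ be connected k-regular compact simple graphs on n₁ and n₂ vertices respectively with n₁ ≤ n₂, and suppose G₁ and G₂ are not isomorphic. Let G be their disjoint union on n = n₁ + n₂ vertices with adjacency matrix A_G, and P_G = {P ∈ ℝ^{n×n} : P A_G = A_G P, all row and column sums of P equal 1, P ≥ 0 entrywise}. If P is an extreme point of P_G that is not a 0/1 matrix, then every row sum of the off-diagonal block B_P = (P_{i,j})_{1 ≤ i ≤ n₁, n₁+1 ≤ j ≤ n} equals 1. -/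
open Matrix

/-!
Write `P = [[Q, B], [C, R]]` in blocks. The off-diagonal blocks intertwine the adjacency
matrices of the two connected `k`-regular graphs (`B A₂ = A₁ B`), so `B 𝟙` is a `k`-eigenvector
of `A₁` and hence constant: all row sums of `B` equal some `c`, all column sums some `d`, and
likewise for `C`; double counting gives `n₁ c = n₂ d`, so `d ≤ c`. If `c < 1`, scaling `Q`, `B, C`
and `R` by suitable factors `1 ± α`, `1 ± β`, `1 ± γ` preserves all line sums and commutation
and exhibits `P` as a midpoint of two points of the polytope, so extremality forces `B = C = 0`.
Then `P` is block diagonal, and by compactness of both graphs it is a convex combination of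
block-diagonal 0/1 points of the polytope, so being extreme it is itself a 0/1 matrix.
-/

namespace SimpleGraph

variable {V W : Type*} [Fintype V] [Fintype W] {G : SimpleGraph V} {H : SimpleGraph W}
  [DecidableRel G.Adj] [DecidableRel H.Adj] {k : ℕ}

/-- `x` lies in the kernel of the Laplacian `k • 1 - A`, whose elements are constant on connected
components. -/
lemma Connected.apply_eq_of_adjMatrix_mulVec_eq (hG : G.Connected)
    (hreg : G.IsRegularOfDegree k) {x : V → ℝ} (hx : G.adjMatrix ℝ *ᵥ x = (k : ℝ) • x)
    (i j : V) : x i = x j := by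
  classical
  have hlap : G.lapMatrix ℝ *ᵥ x = 0 := by
    ext v
    rw [lapMatrix_mulVec_apply, ← adjMatrix_mulVec_apply, hx, hreg v]
    simp
  exact (lapMatrix_mulVec_eq_zero_iff_forall_reachable G).mp hlap i j (hG i j)

lemma Connected.rowSum_eq_of_mul_adjMatrix_eq (hG : G.Connected)
    (hregG : G.IsRegularOfDegree k) (hregH : H.IsRegularOfDegree k) {B : Matrix V W ℝ}
    (hB : B * H.adjMatrix ℝ = G.adjMatrix ℝ * B) (i i' : V) :
    ∑ j, B i j = ∑ j, B i' j := by
  have hones : H.adjMatrix ℝ *ᵥ (fun _ => 1) = (k : ℝ) • fun _ => 1 := by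
    ext v
    simp [hregH v]
  have heig : G.adjMatrix ℝ *ᵥ (B *ᵥ fun _ => 1) = (k : ℝ) • (B *ᵥ fun _ => 1) := by
    rw [mulVec_mulVec, ← hB, ← mulVec_mulVec, hones, mulVec_smul]
  simpa [mulVec, dotProduct] using hG.apply_eq_of_adjMatrix_mulVec_eq hregG heig i i'

lemma Connected.colSum_eq_of_mul_adjMatrix_eq (hH : H.Connected)
    (hregG : G.IsRegularOfDegree k) (hregH : H.IsRegularOfDegree k) {B : Matrix V W ℝ}
    (hB : B * H.adjMatrix ℝ = G.adjMatrix ℝ * B) (j j' : W) :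
    ∑ i, B i j = ∑ i, B i j' := by
  have hBT : Bᵀ * G.adjMatrix ℝ = H.adjMatrix ℝ * Bᵀ := by
    rw [← transpose_adjMatrix G, ← transpose_adjMatrix H, ← transpose_mul, ← transpose_mul, hB]
  simpa using hH.rowSum_eq_of_mul_adjMatrix_eq hregH hregG hBT j j'

end SimpleGraph

lemma Matrix.card_mul_eq_card_mul_of_sums {m n : Type*} [Fintype m] [Fintype n]
    {M : Matrix m n ℝ} {r s : ℝ} (hr : ∀ i, ∑ j, M i j = r) (hs : ∀ j, ∑ i, M i j = s) :
    (Fintype.card m : ℝ) * r = Fintype.card n * s := by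
  calc (Fintype.card m : ℝ) * r = ∑ i, ∑ j, M i j := by simp [hr]
    _ = ∑ j, ∑ i, M i j := Finset.sum_comm
    _ = Fintype.card n * s := by simp [hs]

lemma mem_of_mem_extremePoints_of_mem_convexHull {𝕜 E : Type*} [Field 𝕜] [LinearOrder 𝕜]
    [IsStrictOrderedRing 𝕜] [AddCommGroup E] [Module 𝕜 E] {S T : Set E} (hS : Convex 𝕜 S)
    (hTS : T ⊆ S) {x : E} (hx : x ∈ S.extremePoints 𝕜) (hxT : x ∈ convexHull 𝕜 T) : x ∈ T :=
  extremePoints_convexHull_subset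
    (inter_extremePoints_subset_extremePoints_of_subset (convexHull_min hTS hS) ⟨hxT, hx⟩)

lemma convex_commPolytope {V : Type*} [Fintype V] (A : Matrix V V ℝ) :
    Convex ℝ (commPolytope A) := by
  rintro X ⟨hXA, hXcol, hXrow, hXnn⟩ Y ⟨hYA, hYcol, hYrow, hYnn⟩ a b ha hb hab
  refine ⟨?_, fun j => ?_, fun i => ?_, fun i j => ?_⟩
  · simp only [Matrix.add_mul, Matrix.mul_add, Matrix.smul_mul, Matrix.mul_smul, hXA, hYA]
  · simp [Finset.sum_add_distrib, ← Finset.mul_sum, hXcol, hYcol, hab]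
  · simp [Finset.sum_add_distrib, ← Finset.mul_sum, hXrow, hYrow, hab]
  · simp only [Matrix.add_apply, Matrix.smul_apply, smul_eq_mul]
    exact add_nonneg (mul_nonneg ha (hXnn i j)) (mul_nonneg hb (hYnn i j))

section Blocks

variable {V₁ V₂ : Type*} [Fintype V₁] [Fintype V₂] {A₁ : Matrix V₁ V₁ ℝ} {A₂ : Matrix V₂ V₂ ℝ}
  {Q : Matrix V₁ V₁ ℝ} {B : Matrix V₁ V₂ ℝ} {C : Matrix V₂ V₁ ℝ} {R : Matrix V₂ V₂ ℝ}

lemma fromBlocks_mem_commPolytope_iff_s16 :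
    fromBlocks Q B C R ∈ commPolytope (fromBlocks A₁ 0 0 A₂) ↔
      (Q * A₁ = A₁ * Q ∧ B * A₂ = A₁ * B ∧ C * A₁ = A₂ * C ∧ R * A₂ = A₂ * R) ∧
      (∀ j, ∑ i, Q i j + ∑ i, C i j = 1) ∧ (∀ j, ∑ i, B i j + ∑ i, R i j = 1) ∧
      (∀ i, ∑ j, Q i j + ∑ j, B i j = 1) ∧ (∀ i, ∑ j, C i j + ∑ j, R i j = 1) ∧
      (∀ i j, 0 ≤ Q i j) ∧ (∀ i j, 0 ≤ B i j) ∧ (∀ i j, 0 ≤ C i j) ∧ (∀ i j, 0 ≤ R i j) := by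
  simp only [commPolytope, Set.mem_ofPred_eq, fromBlocks_multiply, fromBlocks_inj,
    Matrix.mul_zero, Matrix.zero_mul, add_zero, zero_add, Fintype.sum_sum_type, Sum.forall,
    fromBlocks_apply₁₁, fromBlocks_apply₁₂, fromBlocks_apply₂₁, fromBlocks_apply₂₂, forall_and]
  tauto

lemma fromBlocks_zero_mem_commPolytope_iff :
    fromBlocks Q 0 0 R ∈ commPolytope (fromBlocks A₁ 0 0 A₂) ↔
      Q ∈ commPolytope A₁ ∧ R ∈ commPolytope A₂ := by
  rw [fromBlocks_mem_commPolytope_iff_s16]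
  simp only [Matrix.zero_mul, Matrix.mul_zero, true_and, Matrix.zero_apply,
    Finset.sum_const_zero, add_zero, zero_add, le_refl, implies_true, commPolytope,
    Set.mem_ofPred_eq]
  tauto

lemma fromBlocks_zero_mem_convexHull_intPoints
    (hQ : Q ∈ convexHull ℝ (intPoints (commPolytope A₁)))
    (hR : R ∈ convexHull ℝ (intPoints (commPolytope A₂))) :
    fromBlocks Q 0 0 R ∈ convexHull ℝ (intPoints (commPolytope (fromBlocks A₁ 0 0 A₂))) := by
  have hlin : IsLinearMap ℝ
      fun QR : Matrix V₁ V₁ ℝ × Matrix V₂ V₂ ℝ => fromBlocks QR.1 0 0 QR.2 :=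
    ⟨fun X Y => by simp [fromBlocks_add], fun a X => by simp [fromBlocks_smul]⟩
  have hsub : (fun QR : Matrix V₁ V₁ ℝ × Matrix V₂ V₂ ℝ => fromBlocks QR.1 0 0 QR.2) ''
      (intPoints (commPolytope A₁) ×ˢ intPoints (commPolytope A₂)) ⊆
        intPoints (commPolytope (fromBlocks A₁ 0 0 A₂)) := by
    rintro _ ⟨⟨Q, R⟩, ⟨⟨hQ, hQint⟩, hR, hRint⟩, rfl⟩
    refine ⟨fromBlocks_zero_mem_commPolytope_iff.2 ⟨hQ, hR⟩, ?_⟩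
    rintro (i | i) (j | j) <;> simp [hQint, hRint]
  refine convexHull_mono hsub ?_
  rw [← hlin.image_convexHull, convexHull_prod]
  exact ⟨(Q, R), ⟨hQ, hR⟩, rfl⟩

lemma fromBlocks_zero_mem_intPoints_of_mem_extremePoints
    (h₁ : commPolytope A₁ = convexHull ℝ (intPoints (commPolytope A₁)))
    (h₂ : commPolytope A₂ = convexHull ℝ (intPoints (commPolytope A₂)))
    (hP : fromBlocks Q 0 0 R ∈ (commPolytope (fromBlocks A₁ 0 0 A₂)).extremePoints ℝ) :
    fromBlocks Q 0 0 R ∈ intPoints (commPolytope (fromBlocks A₁ 0 0 A₂)) := by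
  obtain ⟨hQ, hR⟩ := fromBlocks_zero_mem_commPolytope_iff.1 hP.1
  refine mem_of_mem_extremePoints_of_mem_convexHull (convex_commPolytope _)
    (Set.sep_subset _ _) hP ?_
  exact fromBlocks_zero_mem_convexHull_intPoints (h₁ ▸ hQ) (h₂ ▸ hR)

structure BlockSums (B : Matrix V₁ V₂ ℝ) (C : Matrix V₂ V₁ ℝ) (c d : ℝ) : Prop where
  rowSum_left : ∀ i, ∑ j, B i j = c
  colSum_left : ∀ j, ∑ i, B i j = d
  rowSum_right : ∀ j, ∑ i, C j i = d
  colSum_right : ∀ i, ∑ j, C j i = c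

namespace BlockSums

variable {c d : ℝ}

lemma fromBlocks_smul_mem_commPolytope (hBC : BlockSums B C c d)
    (hP : fromBlocks Q B C R ∈ commPolytope (fromBlocks A₁ 0 0 A₂)) {α β γ : ℝ}
    (hα : -1 ≤ α) (hβ : -1 ≤ β) (hγ : -1 ≤ γ)
    (h₁ : α * (1 - c) + β * c = 0) (h₂ : β * d + γ * (1 - d) = 0) :
    fromBlocks ((1 + α) • Q) ((1 + β) • B) ((1 + β) • C) ((1 + γ) • R) ∈
      commPolytope (fromBlocks A₁ 0 0 A₂) := by
  obtain ⟨⟨hQA, hBA, hCA, hRA⟩, hcol₁, hcol₂, hrow₁, hrow₂, hQ, hB, hC, hR⟩ :=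
    fromBlocks_mem_commPolytope_iff_s16.1 hP
  refine fromBlocks_mem_commPolytope_iff_s16.2
    ⟨⟨?_, ?_, ?_, ?_⟩, fun j => ?_, fun j => ?_, fun i => ?_, fun i => ?_,
      fun i j => ?_, fun i j => ?_, fun i j => ?_, fun i j => ?_⟩
  all_goals simp only [Matrix.smul_mul, Matrix.mul_smul, Matrix.smul_apply, smul_eq_mul,
    ← Finset.mul_sum, hQA, hBA, hCA, hRA]
  · linear_combination (1 + α) * hcol₁ j + (β - α) * hBC.colSum_right j + h₁
  · linear_combination (1 + γ) * hcol₂ j + (β - γ) * hBC.colSum_left j + h₂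
  · linear_combination (1 + α) * hrow₁ i + (β - α) * hBC.rowSum_left i + h₁
  · linear_combination (1 + γ) * hrow₂ i + (β - γ) * hBC.rowSum_right i + h₂
  · exact mul_nonneg (by linarith) (hQ i j)
  · exact mul_nonneg (by linarith) (hB i j)
  · exact mul_nonneg (by linarith) (hC i j)
  · exact mul_nonneg (by linarith) (hR i j)

/-- With `α = c (1 - d)`, `β = -(1 - c) (1 - d)`, `γ = d (1 - c)`, the point is the midpoint of
its rescalings by `±(α, β, γ)`, which stay in the polytope; extremality then forces `β • B = 0`. -/
lemma eq_zero_of_mem_extremePoints (hBC : BlockSums B C c d)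
    (hP : fromBlocks Q B C R ∈ (commPolytope (fromBlocks A₁ 0 0 A₂)).extremePoints ℝ)
    (hc₀ : 0 ≤ c) (hc₁ : c < 1) (hd₀ : 0 ≤ d) (hd₁ : d < 1) : B = 0 ∧ C = 0 := by
  set α := c * (1 - d)
  set β := -((1 - c) * (1 - d))
  set γ := d * (1 - c)
  have hβ : β ≠ 0 := neg_ne_zero.2 (mul_ne_zero (by linarith) (by linarith))
  have hX := hBC.fromBlocks_smul_mem_commPolytope hP.1 (α := α) (β := β) (γ := γ)
    (by nlinarith) (by nlinarith) (by nlinarith) (by ring) (by ring)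
  have hY := hBC.fromBlocks_smul_mem_commPolytope hP.1 (α := -α) (β := -β) (γ := -γ)
    (by nlinarith) (by nlinarith) (by nlinarith) (by ring) (by ring)
  have hXP := hP.2 hX hY ⟨1 / 2, 1 / 2, by norm_num, by norm_num, by norm_num, by
    simp only [fromBlocks_smul, fromBlocks_add, smul_smul, ← add_smul]
    congr 1 <;> convert one_smul ℝ _ using 2 <;> ring⟩
  obtain ⟨-, hB, hC, -⟩ := fromBlocks_inj.1 hXP
  rw [add_smul, one_smul, add_eq_left, smul_eq_zero] at hB hC
  exact ⟨hB.resolve_left hβ, hC.resolve_left hβ⟩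

lemma card_mul_eq (hBC : BlockSums B C c d) :
    (Fintype.card V₁ : ℝ) * c = Fintype.card V₂ * d :=
  card_mul_eq_card_mul_of_sums hBC.rowSum_left hBC.colSum_left

end BlockSums

/-- Double counting in the diagonal blocks `Q` and `R` forces the constants of `B` and `C` to
agree. -/
lemma exists_blockSums_of_mem_commPolytope [Nonempty V₁] [Nonempty V₂]
    {G₁ : SimpleGraph V₁} {G₂ : SimpleGraph V₂} [DecidableRel G₁.Adj] [DecidableRel G₂.Adj]
    {k : ℕ} (hconn₁ : G₁.Connected) (hconn₂ : G₂.Connected)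
    (hreg₁ : G₁.IsRegularOfDegree k) (hreg₂ : G₂.IsRegularOfDegree k)
    (hP : fromBlocks Q B C R ∈ commPolytope (fromBlocks (G₁.adjMatrix ℝ) 0 0 (G₂.adjMatrix ℝ))) :
    ∃ c d, BlockSums B C c d := by
  obtain ⟨⟨-, hBA, hCA, -⟩, hcol₁, hcol₂, hrow₁, hrow₂, -⟩ :=
    fromBlocks_mem_commPolytope_iff_s16.1 hP
  obtain ⟨i₀⟩ := ‹Nonempty V₁›
  obtain ⟨j₀⟩ := ‹Nonempty V₂›
  have hBrow i := hconn₁.rowSum_eq_of_mul_adjMatrix_eq hreg₁ hreg₂ hBA i i₀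
  have hBcol j := hconn₂.colSum_eq_of_mul_adjMatrix_eq hreg₁ hreg₂ hBA j j₀
  have hCrow j := hconn₂.rowSum_eq_of_mul_adjMatrix_eq hreg₂ hreg₁ hCA j j₀
  have hCcol i := hconn₁.colSum_eq_of_mul_adjMatrix_eq hreg₂ hreg₁ hCA i i₀
  have hQ : (Fintype.card V₁ : ℝ) * (1 - ∑ j, B i₀ j) = Fintype.card V₁ * (1 - ∑ j, C j i₀) :=
    card_mul_eq_card_mul_of_sums (fun i => by linarith [hrow₁ i, hBrow i])
      (fun j => by linarith [hcol₁ j, hCcol j])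
  have hR : (Fintype.card V₂ : ℝ) * (1 - ∑ i, C j₀ i) = Fintype.card V₂ * (1 - ∑ i, B i j₀) :=
    card_mul_eq_card_mul_of_sums (fun j => by linarith [hrow₂ j, hCrow j])
      (fun j => by linarith [hcol₂ j, hBcol j])
  have hQ' := mul_left_cancel₀ (by positivity) hQ
  have hR' := mul_left_cancel₀ (by positivity) hR
  exact ⟨_, _, hBrow, hBcol, fun j => (hCrow j).trans (by linarith),
    fun i => (hCcol i).trans (by linarith)⟩

end Blocks

theorem stmt_16_general (k n₁ n₂ : ℕ) (hn : n₁ ≤ n₂)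
    (G₁ : SimpleGraph (Fin n₁)) (G₂ : SimpleGraph (Fin n₂))
    [DecidableRel G₁.Adj] [DecidableRel G₂.Adj]
    (hreg₁ : G₁.IsRegularOfDegree k) (hreg₂ : G₂.IsRegularOfDegree k)
    (hconn₁ : G₁.Connected) (hconn₂ : G₂.Connected)
    (hcomp₁ : IsCompactGraph G₁) (hcomp₂ : IsCompactGraph G₂)
    (P : Matrix (Fin n₁ ⊕ Fin n₂) (Fin n₁ ⊕ Fin n₂) ℝ)
    (hP : P ∈ Set.extremePoints ℝ (commPolytope (sumAdjMatrix n₁ n₂ G₁ G₂)))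
    (hPnotint : ¬ ∀ i j, P i j = 0 ∨ P i j = 1) :
    ∀ i : Fin n₁, ∑ j : Fin n₂, P (Sum.inl i) (Sum.inr j) = 1 := by
  intro i
  obtain ⟨Q, B, C, R, rfl⟩ : ∃ Q B C R, P = fromBlocks Q B C R :=
    ⟨_, _, _, _, (fromBlocks_toBlocks P).symm⟩
  have : Nonempty (Fin n₁) := ⟨i⟩
  have : Nonempty (Fin n₂) := ⟨Fin.castLE hn i⟩
  obtain ⟨c, d, hBC⟩ := exists_blockSums_of_mem_commPolytope hconn₁ hconn₂ hreg₁ hreg₂ hP.1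
  obtain ⟨-, -, -, hrow₁, -, hQ, hB, -⟩ := fromBlocks_mem_commPolytope_iff_s16.1 hP.1
  simp only [fromBlocks_apply₁₂, hBC.rowSum_left i]
  by_contra hc
  have hc₀ : 0 ≤ c := hBC.rowSum_left i ▸ Finset.sum_nonneg fun j _ => hB i j
  have hQi : 0 ≤ ∑ j, Q i j := Finset.sum_nonneg fun j _ => hQ i j
  have hc₁ : c < 1 := lt_of_le_of_ne (by linarith [hrow₁ i, hBC.rowSum_left i]) hc
  have hcard : (n₁ : ℝ) * c = n₂ * d := by simpa using hBC.card_mul_eq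
  have hn' : (n₁ : ℝ) ≤ n₂ := by exact_mod_cast hn
  have hn₁ : (0 : ℝ) < n₁ := by exact_mod_cast i.pos
  have hd₀ : 0 ≤ d := by nlinarith
  have hd₁ : d < 1 := by nlinarith
  obtain ⟨rfl, rfl⟩ := hBC.eq_zero_of_mem_extremePoints hP hc₀ hc₁ hd₀ hd₁
  exact hPnotint (fromBlocks_zero_mem_intPoints_of_mem_extremePoints hcomp₁ hcomp₂ hP).2

theorem stmt_16 (k n₁ n₂ : ℕ) (hn : n₁ ≤ n₂)
    (G₁ : SimpleGraph (Fin n₁)) (G₂ : SimpleGraph (Fin n₂))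
    [DecidableRel G₁.Adj] [DecidableRel G₂.Adj]
    (hreg₁ : G₁.IsRegularOfDegree k) (hreg₂ : G₂.IsRegularOfDegree k)
    (hconn₁ : G₁.Connected) (hconn₂ : G₂.Connected)
    (hcomp₁ : IsCompactGraph G₁) (hcomp₂ : IsCompactGraph G₂)
    (hniso : ¬ Nonempty (G₁ ≃g G₂))
    (P : Matrix (Fin n₁ ⊕ Fin n₂) (Fin n₁ ⊕ Fin n₂) ℝ)
    (hP : P ∈ Set.extremePoints ℝ (commPolytope (sumAdjMatrix n₁ n₂ G₁ G₂)))
    (hPnotint : ¬ ∀ i j, P i j = 0 ∨ P i j = 1) :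
    ∀ i : Fin n₁, ∑ j : Fin n₂, P (Sum.inl i) (Sum.inr j) = 1 :=
  stmt_16_general k n₁ n₂ hn G₁ G₂ hreg₁ hreg₂ hconn₁ hconn₂ hcomp₁ hcomp₂ P hP hPnotint
end

section
/- The symmetric group S_n is permutation summable: if P₁,…,P_m are n×n permutation matrices such that the matrix ∑_{i=1}^m P_i − I has all entries nonnegative, then there exist permutation matrices Q₁,…,Q_{m−1} such that ∑_{i=1}^m P_i − I = ∑_{j=1}^{m−1} Q_j (when m = 1 this means P₁ = I). -/
/-!
`∑ Pᵢ - I` is a nonnegative integer matrix all of whose row and column sums equal `m - 1`.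
By König's theorem such a matrix is a sum of `m - 1` permutation matrices: Hall's condition
for its support follows from double counting, so some permutation matrix lies below it, and
subtracting it lowers every line sum by one.
-/

/-- The permutation matrix of `σ`, with `(i,j)` entry `1` exactly when `i = σ j`. -/
def permMat (n : ℕ) (σ : Equiv.Perm (Fin n)) : Matrix (Fin n) (Fin n) ℝ :=
  Matrix.of fun i j => if i = σ j then 1 else 0

open Finset Equiv

variable {ι : Type*} [Fintype ι]

def HasLineSums (A : Matrix ι ι ℕ) (k : ℕ) : Prop :=
  (∀ i, ∑ j, A i j = k) ∧ ∀ j, ∑ i, A i j = k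

namespace HasLineSums

theorem sum {α : Type*} {s : Finset α} {A : α → Matrix ι ι ℕ} {k : α → ℕ}
    (h : ∀ a ∈ s, HasLineSums (A a) (k a)) : HasLineSums (∑ a ∈ s, A a) (∑ a ∈ s, k a) := by
  constructor
  · intro i
    simp only [Matrix.sum_apply]
    rw [Finset.sum_comm]
    exact Finset.sum_congr rfl fun a ha => (h a ha).1 i
  · intro j
    simp only [Matrix.sum_apply]
    rw [Finset.sum_comm]
    exact Finset.sum_congr rfl fun a ha => (h a ha).2 j

theorem tsub {A B : Matrix ι ι ℕ} {a b : ℕ} (hA : HasLineSums A a) (hB : HasLineSums B b)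
    (hle : ∀ i j, B i j ≤ A i j) : HasLineSums (A - B) (a - b) := by
  constructor
  · intro i
    simp only [Matrix.sub_apply]
    rw [Finset.sum_tsub_distrib _ fun j _ => hle i j, hA.1, hB.1]
  · intro j
    simp only [Matrix.sub_apply]
    rw [Finset.sum_tsub_distrib _ fun i _ => hle i j, hA.2, hB.2]

variable [DecidableEq ι]

theorem permMatrix (σ : Perm ι) : HasLineSums (σ.permMatrix ℕ) 1 :=
  ⟨fun i => by simp, fun j => by simp [← Equiv.eq_symm_apply]⟩

theorem one : HasLineSums (1 : Matrix ι ι ℕ) 1 := by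
  simpa using permMatrix (1 : Perm ι)

/-- Hall's condition for the support: rows `s` carry total weight `k * #s`, and columns
of weight `k` can only absorb this if there are at least `#s` of them. -/
theorem exists_perm_pos {A : Matrix ι ι ℕ} {k : ℕ} (h : HasLineSums A k) (hk : 0 < k) :
    ∃ σ : Perm ι, ∀ i, 0 < A i (σ i) := by
  let support (i : ι) : Finset ι := {j | 0 < A i j}
  have hall (s : Finset ι) : #s ≤ #(s.biUnion support) := by
    refine le_of_mul_le_mul_left ?_ hk
    calc k * #s = ∑ i ∈ s, ∑ j, A i j := by simp [h.1, mul_comm]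
      _ = ∑ i ∈ s, ∑ j ∈ s.biUnion support, A i j := by
        refine Finset.sum_congr rfl fun i hi => (Finset.sum_subset (subset_univ _) ?_).symm
        intro j _ hj
        by_contra hne
        exact hj (mem_biUnion.2 ⟨i, hi, by simp [support, Nat.pos_of_ne_zero hne]⟩)
      _ ≤ ∑ i, ∑ j ∈ s.biUnion support, A i j :=
        Finset.sum_le_sum_of_subset (subset_univ s)
      _ = ∑ j ∈ s.biUnion support, ∑ i, A i j := Finset.sum_comm
      _ = k * #(s.biUnion support) := by simp [h.2, mul_comm]
  obtain ⟨f, hf, hfs⟩ := (all_card_le_biUnion_card_iff_exists_injective support).1 hall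
  exact ⟨Equiv.ofBijective f hf.bijective_of_finite, fun i => by simpa [support] using hfs i⟩

/-- König's theorem. -/
theorem exists_eq_sum_permMatrix {A : Matrix ι ι ℕ} {k : ℕ} (h : HasLineSums A k) :
    ∃ τ : Fin k → Perm ι, A = ∑ s, (τ s).permMatrix ℕ := by
  induction k generalizing A with
  | zero =>
    refine ⟨Fin.elim0, ?_⟩
    ext i j
    simpa using (Finset.sum_eq_zero_iff.1 (h.1 i)) j (mem_univ j)
  | succ k ih =>
    obtain ⟨σ, hσ⟩ := h.exists_perm_pos k.succ_pos
    have hle : ∀ i j, σ.permMatrix ℕ i j ≤ A i j := by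
      intro i j
      by_cases hij : σ i = j
      · simpa [← hij, Nat.one_le_iff_ne_zero, Nat.pos_iff_ne_zero] using hσ i
      · simp [hij]
    obtain ⟨τ, hτ⟩ := ih (by simpa using h.tsub (permMatrix σ) hle)
    refine ⟨Fin.cons σ τ, ?_⟩
    rw [Fin.sum_univ_succ, Fin.cons_zero]
    simp only [Fin.cons_succ, ← hτ]
    ext i j
    simp only [Matrix.add_apply, Matrix.sub_apply]
    have := hle i j
    omega

end HasLineSums

theorem permMat_eq_map_permMatrix (n : ℕ) (σ : Perm (Fin n)) :
    permMat n σ = (σ⁻¹.permMatrix ℕ).map (↑) := by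
  ext i j
  simp [permMat, Perm.inv_def, Equiv.symm_apply_eq]

theorem sum_permMat_eq_map {α : Type*} (n : ℕ) (s : Finset α) (σ : α → Perm (Fin n)) :
    ∑ a ∈ s, permMat n (σ a) = (∑ a ∈ s, (σ a)⁻¹.permMatrix ℕ).map (↑) := by
  ext i j
  simp only [Matrix.map_apply, Matrix.sum_apply, Nat.cast_sum, permMat_eq_map_permMatrix]

theorem stmt_17_general (n m : ℕ) (σ : Fin m → Equiv.Perm (Fin n))
    (hnn : ∀ i j, 0 ≤ ((∑ t, permMat n (σ t)) - 1) i j) :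
    ∃ τ : Fin (m - 1) → Equiv.Perm (Fin n),
      (∑ t, permMat n (σ t)) - 1 = ∑ s, permMat n (τ s) := by
  set S : Matrix (Fin n) (Fin n) ℕ := ∑ t, (σ t)⁻¹.permMatrix ℕ
  have hS : ∑ t, permMat n (σ t) = S.map (↑) := sum_permMat_eq_map n univ σ
  have one_le : ∀ i j, (1 : Matrix (Fin n) (Fin n) ℕ) i j ≤ S i j := by
    intro i j
    have := hnn i j
    rw [hS] at this
    by_cases hij : i = j <;> simp_all [Matrix.one_apply]
  have hA : HasLineSums (S - 1) (m - 1) := by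
    simpa [S] using
      (HasLineSums.sum fun t _ => .permMatrix (σ t)⁻¹).tsub HasLineSums.one one_le
  obtain ⟨τ, hτ⟩ := hA.exists_eq_sum_permMatrix
  refine ⟨fun s => (τ s)⁻¹, ?_⟩
  calc (∑ t, permMat n (σ t)) - 1 = (S - 1).map (↑) := by
        ext i j
        rw [Matrix.sub_apply, hS, Matrix.map_apply, Matrix.map_apply, Matrix.sub_apply,
          Nat.cast_sub (one_le i j)]
        simp [Matrix.one_apply]
    _ = ∑ s, permMat n (τ s)⁻¹ := by simp [hτ, sum_permMat_eq_map]

theorem stmt_17 (n m : ℕ) (hm : 1 ≤ m) (σ : Fin m → Equiv.Perm (Fin n))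
    (hnn : ∀ i j, 0 ≤ ((∑ t, permMat n (σ t)) - 1) i j) :
    ∃ τ : Fin (m - 1) → Equiv.Perm (Fin n),
      (∑ t, permMat n (σ t)) - 1 = ∑ s, permMat n (τ s) :=
  stmt_17_general n m σ hnn
end

section
/- Let A be a subgroup of the symmetric group S_n that is strongly fixed-point free: every non-identity element σ ∈ A satisfies σ(i) ≠ i for all i ∈ {1,…,n}. Then A is permutation summable: if σ₁,…,σ_m ∈ A (not necessarily distinct) are such that ∑_{i=1}^m P_{σ_i} − I has all entries nonnegative (where P_σ denotes the permutation matrix of σ), then there exist τ₁,…,τ_{m−1} ∈ A with ∑_{i=1}^m P_{σ_i} − I = ∑_{j=1}^{m−1} P_{τ_j}. -/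
/-!
A diagonal entry of `∑ P_{σ_t} - I` can only be nonnegative if some `σ_t` fixes that index,
and in a strongly fixed-point free group such a `σ_t` is the identity. Removing it from the
family leaves exactly `∑ P_{σ_t} - I`.
-/

lemma permMat_one (n : ℕ) : permMat n 1 = 1 := by
  ext i j
  simp only [permMat, Matrix.of_apply, Equiv.Perm.coe_one, id_eq, Matrix.one_apply]
  congr -- the two sides differ only in their `Decidable (i = j)` instances

lemma permMat_apply_self_of_ne {n : ℕ} {σ : Equiv.Perm (Fin n)} {i : Fin n} (h : σ i ≠ i) :
    permMat n σ i i = 0 :=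
  if_neg (Ne.symm h)

lemma exists_apply_eq_self_of_sum_permMat_sub_one_nonneg {ι : Type*} [Fintype ι] {n : ℕ}
    {σ : ι → Equiv.Perm (Fin n)} {i : Fin n}
    (hnn : 0 ≤ ((∑ t, permMat n (σ t)) - 1) i i) : ∃ t, σ t i = i := by
  by_contra! hmoved
  have hdiag : (∑ t, permMat n (σ t)) i i = 0 := by
    rw [Matrix.sum_apply]
    exact Finset.sum_eq_zero fun t _ => permMat_apply_self_of_ne (hmoved t)
  rw [Matrix.sub_apply, hdiag, Matrix.one_apply_eq] at hnn
  linarith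

lemma Fin.sum_univ_sub_eq_sum_succAbove {M : Type*} [AddCommGroup M] {k : ℕ}
    (f : Fin (k + 1) → M) (t : Fin (k + 1)) :
    ∑ s, f s - f t = ∑ s, f (t.succAbove s) := by
  rw [Fin.sum_univ_succAbove f t, add_sub_cancel_left]

theorem stmt_18_general (n : ℕ) (A : Subgroup (Equiv.Perm (Fin n)))
    (hfpf : ∀ σ ∈ A, σ ≠ 1 → ∀ i, σ i ≠ i)
    (m : ℕ) (σ : Fin m → Equiv.Perm (Fin n)) (hσ : ∀ t, σ t ∈ A)
    (hnn : ∀ i j, 0 ≤ ((∑ t, permMat n (σ t)) - 1) i j) :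
    ∃ τ : Fin (m - 1) → Equiv.Perm (Fin n), (∀ s, τ s ∈ A) ∧
      (∑ t, permMat n (σ t)) - 1 = ∑ s, permMat n (τ s) := by
  rcases n with _ | n
  · exact ⟨fun _ => 1, fun _ => A.one_mem, Subsingleton.elim _ _⟩
  obtain ⟨t₀, hfix⟩ := exists_apply_eq_self_of_sum_permMat_sub_one_nonneg (hnn 0 0)
  have hone : σ t₀ = 1 := not_not.1 fun h => hfpf _ (hσ t₀) h 0 hfix
  obtain ⟨k, rfl⟩ : ∃ k, m = k + 1 := Nat.exists_eq_succ_of_ne_zero t₀.pos.ne'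
  refine ⟨fun s => σ (t₀.succAbove s), fun s => hσ _, ?_⟩
  rw [← permMat_one, ← hone]
  exact Fin.sum_univ_sub_eq_sum_succAbove (fun t => permMat (n + 1) (σ t)) t₀

theorem stmt_18 (n : ℕ) (A : Subgroup (Equiv.Perm (Fin n)))
    (hfpf : ∀ σ ∈ A, σ ≠ 1 → ∀ i, σ i ≠ i)
    (m : ℕ) (hm : 1 ≤ m) (σ : Fin m → Equiv.Perm (Fin n)) (hσ : ∀ t, σ t ∈ A)
    (hnn : ∀ i j, 0 ≤ ((∑ t, permMat n (σ t)) - 1) i j) :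
    ∃ τ : Fin (m - 1) → Equiv.Perm (Fin n), (∀ s, τ s ∈ A) ∧
      (∑ t, permMat n (σ t)) - 1 = ∑ s, permMat n (τ s) :=
  stmt_18_general n A hfpf m σ hσ hnn
end
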